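/- arXiv:2011.01681 — 8 statements merged into one kernel-verified Lean document; each statement's English description precedes it below -/
import Mathlib

section
/- Let f : ℝ^d → ℝ^d be a C² diffeomorphism and set h := f⁻¹. Suppose ‖Dh(x)‖₂ ≤ B′ for all x ∈ ℝ^d and ‖Hess f_c(z)‖₂ ≤ B″ for all z ∈ ℝ^d and all components c ∈ {1,…,d}. Then ‖∇ log|det Dh(x)|‖₂ ≤ d·B′²·B″ for all x ∈ ℝ^d. -/
open Matrix
-- det as continuous multilinear map on rows
noncomputable def detCMM (d : ℕ) : ContinuousMultilinearMap ℝ (fun _ : Fin d => (Fin d → ℝ)) ℝ :=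
  MultilinearMap.mkContinuous (Matrix.detRowAlternating (R := ℝ) (n := Fin d)).toMultilinearMap
    (Nat.factorial d) (by
      intro m
      have : Matrix.detRowAlternating (R := ℝ) (n := Fin d) (Matrix.of m)
          = ∑ σ : Equiv.Perm (Fin d), Equiv.Perm.sign σ • ∏ i, (Matrix.of m) (σ i) i :=
        Matrix.det_apply _
      show ‖Matrix.det (Matrix.of m)‖ ≤ _
      rw [Matrix.det_apply]
      calc ‖∑ σ : Equiv.Perm (Fin d), Equiv.Perm.sign σ • ∏ i, (Matrix.of m) (σ i) i‖
          ≤ ∑ σ : Equiv.Perm (Fin d), ‖Equiv.Perm.sign σ • ∏ i, (Matrix.of m) (σ i) i‖ :=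
            norm_sum_le _ _
        _ ≤ ∑ σ : Equiv.Perm (Fin d), ∏ i, ‖m i‖ := by
            refine Finset.sum_le_sum fun σ _ => ?_
            rw [Units.smul_def, zsmul_eq_mul, norm_mul]
            have h1 : ‖((Equiv.Perm.sign σ : ℤ) : ℝ)‖ = 1 := by
              rcases Int.units_eq_one_or (Equiv.Perm.sign σ) with h | h <;> simp [h]
            rw [h1, one_mul, norm_prod]
            have : ∏ i, ‖(Matrix.of m) (σ i) i‖ ≤ ∏ i, ‖m (σ i)‖ := by
              refine Finset.prod_le_prod (fun i _ => norm_nonneg _) fun i _ => ?_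
              exact norm_le_pi_norm (m (σ i)) i
            refine this.trans_eq ?_
            exact Equiv.prod_comp σ (fun i => ‖m i‖)
        _ = (Nat.factorial d : ℝ) * ∏ i, ‖m i‖ := by
            rw [Finset.sum_const, Finset.card_univ, Fintype.card_perm, Fintype.card_fin,
              nsmul_eq_mul]
      )

lemma detCMM_apply {d : ℕ} (m : Fin d → (Fin d → ℝ)) : detCMM d m = Matrix.det (Matrix.of m) := rfl

lemma euclid_clm_apply_eq_sum {d : ℕ} {F : Type*} [NormedAddCommGroup F] [NormedSpace ℝ F]
    (T : EuclideanSpace ℝ (Fin d) →L[ℝ] F) (u : EuclideanSpace ℝ (Fin d)) :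
    T u = ∑ j, u j • T (EuclideanSpace.single j (1:ℝ)) := by
  have hu := ((EuclideanSpace.basisFun (Fin d) ℝ).toBasis.sum_repr u)
  simp only [OrthonormalBasis.coe_toBasis_repr_apply, EuclideanSpace.basisFun_repr,
    OrthonormalBasis.coe_toBasis, EuclideanSpace.basisFun_apply] at hu
  conv_lhs => rw [← hu]
  rw [map_sum]
  simp

lemma det_updateRow_eq_of_mul_eq_one {d : ℕ} (A B : Matrix (Fin d) (Fin d) ℝ)
    (hAB : A * B = 1) (i : Fin d) (b : Fin d → ℝ) :
    (A.updateRow i b).det = A.det * ∑ j, B j i * b j := by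
  have hBA : B * A = 1 := mul_eq_one_comm.mp hAB
  have hadj : Matrix.adjugate A = A.det • B := by
    calc Matrix.adjugate A = (B * A) * Matrix.adjugate A := by rw [hBA, Matrix.one_mul]
      _ = B * (A * Matrix.adjugate A) := by rw [Matrix.mul_assoc]
      _ = B * (A.det • 1) := by rw [Matrix.mul_adjugate]
      _ = A.det • B := by rw [Matrix.mul_smul, Matrix.mul_one]
  rw [← Matrix.cramer_transpose_apply, Matrix.cramer_eq_adjugate_mulVec,
    ← Matrix.adjugate_transpose, hadj]
  simp [Matrix.mulVec, dotProduct, Finset.mul_sum, mul_assoc]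

/-- Gradient bound for the log-Jacobian-determinant of the inverse of a `C²` diffeomorphism:
if `‖Dh(x)‖₂ ≤ B′` everywhere and `‖Hess f_c(z)‖₂ ≤ B″` for every component `c`, then
`‖∇ log|det Dh(x)|‖₂ ≤ d · B′² · B″`. -/
theorem grad_log_abs_det_inverse_bound
    {d : ℕ}
    (f h : EuclideanSpace ℝ (Fin d) → EuclideanSpace ℝ (Fin d))
    (hf : ContDiff ℝ 2 f) (hh : ContDiff ℝ 2 h)
    (hleft : Function.LeftInverse h f) (hright : Function.RightInverse h f)
    (B' B'' : ℝ)
    (hB' : ∀ x, ‖fderiv ℝ h x‖ ≤ B')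
    (hB'' : ∀ (z : EuclideanSpace ℝ (Fin d)) (c : Fin d),
      ‖fderiv ℝ (fderiv ℝ (fun w => f w c)) z‖ ≤ B'')
    (x : EuclideanSpace ℝ (Fin d)) :
    ‖gradient (fun y => Real.log |(fderiv ℝ h y).det|) x‖ ≤ d * B' ^ 2 * B'' := by
  classical
  let e : Fin d → EuclideanSpace ℝ (Fin d) := fun j => EuclideanSpace.single j (1:ℝ)
  set z := h x with hz
  -- basic differentiability facts
  have hfd : Differentiable ℝ f := hf.differentiable two_ne_zero
  have hhd : Differentiable ℝ h := hh.differentiable two_ne_zero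
  -- component functions of f
  have hfc : ∀ i : Fin d, ContDiff ℝ 2 (fun w => f w i) := fun i => by
    exact (EuclideanSpace.proj (𝕜 := ℝ) i).contDiff.comp hf
  have hFc : ∀ i : Fin d, ContDiff ℝ 1 (fderiv ℝ (fun w => f w i)) := fun i =>
    (hfc i).fderiv_right (le_refl _)
  -- evaluation CLM
  let ev : (EuclideanSpace ℝ (Fin d) →L[ℝ] ℝ) →L[ℝ] (Fin d → ℝ) :=
    ContinuousLinearMap.pi (fun j => ContinuousLinearMap.apply ℝ ℝ (e j))
  -- row functions
  let g : Fin d → EuclideanSpace ℝ (Fin d) → (Fin d → ℝ) := fun i y => fun j => fderiv ℝ (fun w => f w i) (h y) (e j)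
  let G : Fin d → (EuclideanSpace ℝ (Fin d) →L[ℝ] (Fin d → ℝ)) := fun i =>
    (ev ∘L fderiv ℝ (fderiv ℝ (fun w => f w i)) z) ∘L fderiv ℝ h x
  have hg : ∀ i, HasFDerivAt (g i) (G i) x := by
    intro i
    have h1 : HasFDerivAt h (fderiv ℝ h x) x := (hhd x).hasFDerivAt
    have h2 : HasFDerivAt (fderiv ℝ (fun w => f w i))
        (fderiv ℝ (fderiv ℝ (fun w => f w i)) z) z :=
      (((hFc i).differentiable one_ne_zero) z).hasFDerivAt
    have h3 := (ev.hasFDerivAt.comp z h2).comp x h1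
    exact h3
  -- the determinant function
  let φ : EuclideanSpace ℝ (Fin d) → ℝ := fun y => detCMM d (fun i => g i y)
  let Dφ : EuclideanSpace ℝ (Fin d) →L[ℝ] ℝ :=
    ∑ i : Fin d, ((detCMM d).toContinuousLinearMap (fun j => g j x) i) ∘L (G i)
  have hφ : HasFDerivAt φ Dφ x := HasFDerivAt.multilinear_comp (detCMM d) hg
  -- components of the derivative of f
  have hcomponent : ∀ (w : EuclideanSpace ℝ (Fin d)) (i : Fin d),
      fderiv ℝ (fun w => f w i) w = (EuclideanSpace.proj (𝕜 := ℝ) i) ∘L fderiv ℝ f w := by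
    intro w i
    have h1 : HasFDerivAt (fun w => f w i)
        ((EuclideanSpace.proj (𝕜 := ℝ) i) ∘L fderiv ℝ f w) w :=
      ((EuclideanSpace.proj (𝕜 := ℝ) i).hasFDerivAt (x := f w)).comp w (hfd w).hasFDerivAt
    exact h1.fderiv
  -- identification of φ with the determinant of Df
  have hphi : ∀ y, φ y = (fderiv ℝ f (h y)).det := by
    intro y
    have hφy : φ y = Matrix.det (Matrix.of fun i j => (fderiv ℝ f (h y)) (e j) i) := by
      show Matrix.det _ = _
      congr 1
      ext i j
      simp only [Matrix.of_apply]
      show fderiv ℝ (fun w => f w i) (h y) (e j) = _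
      rw [hcomponent]
      rfl
    rw [hφy]
    show _ = LinearMap.det _
    rw [← LinearMap.det_toMatrix ((EuclideanSpace.basisFun (Fin d) ℝ).toBasis)]
    congr 1
  -- matrices of Dh and Df are inverse to each other
  have hcomp : ∀ y, (fderiv ℝ f (h y)) ∘L (fderiv ℝ h y) = ContinuousLinearMap.id ℝ (EuclideanSpace ℝ (Fin d)) := by
    intro y
    have H : HasFDerivAt (f ∘ h) ((fderiv ℝ f (h y)) ∘L fderiv ℝ h y) y :=
      (hfd (h y)).hasFDerivAt.comp y (hhd y).hasFDerivAt
    rw [show f ∘ h = id from funext hright] at H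
    have := H.fderiv
    rw [fderiv_id] at this
    exact this.symm
  have hcomp' : ∀ y, (fderiv ℝ h y) ∘L (fderiv ℝ f (h y)) = ContinuousLinearMap.id ℝ (EuclideanSpace ℝ (Fin d)) := by
    intro y
    have H : HasFDerivAt (h ∘ f) ((fderiv ℝ h (f (h y))) ∘L fderiv ℝ f (h y)) (h y) :=
      (hhd (f (h y))).hasFDerivAt.comp (h y) (hfd (h y)).hasFDerivAt
    rw [show h ∘ f = id from funext hleft] at H
    have := H.fderiv
    rw [fderiv_id] at this
    rw [hright y] at this
    exact this.symm
  have hmul : ∀ y, φ y * (fderiv ℝ h y).det = 1 := by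
    intro y
    rw [hphi y]
    have := congrArg ContinuousLinearMap.det (hcomp y)
    rw [show ((fderiv ℝ f (h y)).comp (fderiv ℝ h y)).det
        = (fderiv ℝ f (h y)).det * (fderiv ℝ h y).det from by
      simp [ContinuousLinearMap.det, ContinuousLinearMap.coe_comp, LinearMap.det_comp]] at this
    simpa [ContinuousLinearMap.det, ContinuousLinearMap.coe_id, LinearMap.det_id] using this
  have hφ0 : ∀ y, φ y ≠ 0 := fun y => left_ne_zero_of_mul_eq_one (hmul y)
  have hdet : ∀ y, (fderiv ℝ h y).det = (φ y)⁻¹ := by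
    intro y
    field_simp [hφ0 y]
    linarith [hmul y]
  -- the target function equals -log φ
  have htarget : (fun y => Real.log |(fderiv ℝ h y).det|) = fun y => - Real.log (φ y) := by
    funext y
    rw [hdet y, abs_inv, Real.log_inv, Real.log_abs]
  -- derivative of the target
  have hlog : HasFDerivAt (fun y => - Real.log (φ y)) (-((φ x)⁻¹ • Dφ)) x := by
    exact ((Real.hasDerivAt_log (hφ0 x)).comp_hasFDerivAt x hφ).neg
  have hmain : HasFDerivAt (fun y => Real.log |(fderiv ℝ h y).det|) (-((φ x)⁻¹ • Dφ)) x := by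
    rw [htarget]; exact hlog
  -- gradient norm = fderiv norm
  have hgrad : ‖gradient (fun y => Real.log |(fderiv ℝ h y).det|) x‖ = ‖-((φ x)⁻¹ • Dφ)‖ := by
    rw [gradient, hmain.fderiv]
    exact (InnerProductSpace.toDual ℝ (EuclideanSpace ℝ (Fin d))).symm.norm_map _
  rw [hgrad, norm_neg]
  rcases Nat.eq_zero_or_pos d with hd | hd
  · subst hd
    have hD0 : Dφ = 0 := by
      simp [Dφ]
    rw [hD0]
    simp
  · have hB'nn : 0 ≤ B' := le_trans (norm_nonneg _) (hB' x)
    have hB''nn : 0 ≤ B'' := le_trans (ContinuousLinearMap.opNorm_nonneg _) (hB'' x ⟨0, hd⟩)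
    refine ContinuousLinearMap.opNorm_le_bound _ (by positivity) (fun v => ?_)
    set w : EuclideanSpace ℝ (Fin d) := fderiv ℝ h x v with hwdef
    set m : Fin d → Fin d → ℝ := fun j => g j x with hm
    set A : Matrix (Fin d) (Fin d) ℝ := Matrix.of m with hA
    set Mh : Matrix (Fin d) (Fin d) ℝ :=
      Matrix.of (fun i j => fderiv ℝ h x (e j) i) with hMh
    have hAentry : ∀ i j, A i j
        = ((EuclideanSpace.proj (𝕜 := ℝ) i) ∘L fderiv ℝ f z) (e j) := by
      intro i j
      show g i x j = _
      simp only [g]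
      rw [hcomponent]
    have hAB : A * Mh = 1 := by
      ext i k
      rw [Matrix.mul_apply, Matrix.one_apply]
      have hsum : ∑ j, A i j * Mh j k
          = ∑ j, (fderiv ℝ h x (e k)) j •
            (((EuclideanSpace.proj (𝕜 := ℝ) i) ∘L fderiv ℝ f z)
              (EuclideanSpace.single j (1:ℝ))) := by
        refine Finset.sum_congr rfl fun j _ => ?_
        rw [hAentry i j, smul_eq_mul, mul_comm]
        rfl
      rw [hsum, ← euclid_clm_apply_eq_sum]
      have hid := congrArg
        (fun (T : EuclideanSpace ℝ (Fin d) →L[ℝ] EuclideanSpace ℝ (Fin d)) => (T (e k)) i)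
        (hcomp x)
      simp only [ContinuousLinearMap.comp_apply, ContinuousLinearMap.id_apply] at hid
      show (fderiv ℝ f z ((fderiv ℝ h x) (e k))) i = _
      rw [hid]
      simp [e, EuclideanSpace.single_apply]
    have hdet_term : ∀ i : Fin d, (detCMM d) (Function.update m i (G i v))
        = φ x * ((fderiv ℝ (fderiv ℝ (fun w' => f w' i)) z) w) (fderiv ℝ h x (e i)) := by
      intro i
      have h1 : (detCMM d) (Function.update m i (G i v)) = (A.updateRow i (G i v)).det := rfl
      rw [h1, det_updateRow_eq_of_mul_eq_one A Mh hAB]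
      have h2 : ∑ j, Mh j i * (G i v) j
          = ((fderiv ℝ (fderiv ℝ (fun w' => f w' i)) z) w) (fderiv ℝ h x (e i)) := by
        rw [euclid_clm_apply_eq_sum ((fderiv ℝ (fderiv ℝ (fun w' => f w' i)) z) w)
          (fderiv ℝ h x (e i))]
        refine Finset.sum_congr rfl fun j _ => ?_
        show (fderiv ℝ h x (e i)) j * _ = _
        rw [smul_eq_mul]
        congr 1
      rw [h2]
      congr 1
    have hDφ : ((φ x)⁻¹ • Dφ) v
        = ∑ i, ((fderiv ℝ (fderiv ℝ (fun w' => f w' i)) z) w) (fderiv ℝ h x (e i)) := by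
      rw [ContinuousLinearMap.smul_apply]
      have hDv : Dφ v = ∑ i, (detCMM d) (Function.update m i (G i v)) := by
        simp [Dφ, ContinuousLinearMap.sum_apply, hm]
      rw [hDv, Finset.sum_congr rfl fun i _ => hdet_term i, ← Finset.mul_sum,
        smul_eq_mul, inv_mul_cancel_left₀ (hφ0 x)]
    rw [hDφ]
    have hwle : ‖w‖ ≤ B' * ‖v‖ := by
      refine le_trans ((fderiv ℝ h x).le_opNorm v) ?_
      exact mul_le_mul_of_nonneg_right (hB' x) (norm_nonneg v)
    calc ‖∑ i : Fin d, ((fderiv ℝ (fderiv ℝ (fun w' => f w' i)) z) w) (fderiv ℝ h x (e i))‖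
        ≤ ∑ i : Fin d, ‖((fderiv ℝ (fderiv ℝ (fun w' => f w' i)) z) w) (fderiv ℝ h x (e i))‖ :=
          norm_sum_le _ _
      _ ≤ ∑ i : Fin d, (B'' * (B' * ‖v‖)) * (B' * 1) := by
          refine Finset.sum_le_sum fun i _ => ?_
          refine le_trans (ContinuousLinearMap.le_opNorm _ _) ?_
          refine mul_le_mul ?_ ?_ (norm_nonneg _) (by positivity)
          · refine le_trans ((fderiv ℝ (fderiv ℝ (fun w' => f w' i)) z).le_opNorm w) ?_
            exact mul_le_mul (hB'' z i) hwle (norm_nonneg _) hB''nn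
          · refine le_trans ((fderiv ℝ h x).le_opNorm (e i)) ?_
            have : ‖e i‖ = 1 := by simp [e, EuclideanSpace.norm_single]
            rw [this]
            exact mul_le_mul_of_nonneg_right (hB' x) zero_le_one
      _ = ↑d * B' ^ 2 * B'' * ‖v‖ := by
          rw [Finset.sum_const, Finset.card_univ, Fintype.card_fin, nsmul_eq_mul]
          ring
end

section
/- Let f : ℝ^d → ℝ^d be a C² diffeomorphism with h := f⁻¹, and let g : ℝ^d → ℝ be twice continuously differentiable. Suppose ‖Dh(x)‖₂ ≤ B′_f for all x, ‖Hess f_c(z)‖₂ ≤ B″_f for all z and all c ∈ {1,…,d}, and ‖∇g(z)‖₂ ≤ B′_g, ‖Hess g(z)‖₂ ≤ B″_g for all z. Then for all x ∈ ℝ^d: ‖Hess(g ∘ h)(x)‖₂ ≤ B′_f² · ( B″_g + d · B′_f · B″_f · B′_g ). -/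
set_option maxHeartbeats 2000000 in
/-- Hessian bound for `g ∘ h` where `h = f⁻¹` is the inverse of a `C²` diffeomorphism:
`‖Hess (g ∘ h)(x)‖₂ ≤ B′_f² · (B″_g + d · B′_f · B″_f · B′_g)`. -/
theorem hessian_comp_inverse_bound
    {d : ℕ}
    (f h : EuclideanSpace ℝ (Fin d) → EuclideanSpace ℝ (Fin d))
    (g : EuclideanSpace ℝ (Fin d) → ℝ)
    (hf : ContDiff ℝ 2 f) (hh : ContDiff ℝ 2 h) (hg : ContDiff ℝ 2 g)
    (hleft : Function.LeftInverse h f) (hright : Function.RightInverse h f)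
    (B'f B''f B'g B''g : ℝ)
    (hB'f : ∀ x, ‖fderiv ℝ h x‖ ≤ B'f)
    (hB''f : ∀ (z : EuclideanSpace ℝ (Fin d)) (c : Fin d),
      ‖fderiv ℝ (fderiv ℝ (fun w => f w c)) z‖ ≤ B''f)
    (hB'g : ∀ z, ‖gradient g z‖ ≤ B'g)
    (hB''g : ∀ z, ‖fderiv ℝ (fderiv ℝ g) z‖ ≤ B''g)
    (x : EuclideanSpace ℝ (Fin d)) :
    ‖fderiv ℝ (fderiv ℝ (g ∘ h)) x‖ ≤ B'f ^ 2 * (B''g + d * B'f * B''f * B'g) := by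
  have hB'f0 : 0 ≤ B'f := le_trans (norm_nonneg _) (hB'f x)
  have hB''g0 : 0 ≤ B''g := le_trans (ContinuousLinearMap.opNorm_nonneg _) (hB''g x)
  have hB'g0 : 0 ≤ B'g := le_trans (norm_nonneg _) (hB'g x)
  rcases Nat.eq_zero_or_pos d with hd0 | hdpos
  · -- degenerate case : the space is trivial
    subst hd0
    haveI : Subsingleton (EuclideanSpace ℝ (Fin 0)) :=
      ⟨fun a b => PiLp.ext fun i => i.elim0⟩
    have hz : fderiv ℝ (fderiv ℝ (g ∘ h)) x = 0 := by
      ext v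
      rw [Subsingleton.elim v (0 : EuclideanSpace ℝ (Fin 0))]
      simp
    rw [hz, ContinuousLinearMap.opNorm_zero]
    have : (0:ℝ) ≤ B'f ^ 2 * B''g :=
      mul_nonneg (pow_nonneg hB'f0 2) hB''g0
    simpa using this
  have hB''f0 : 0 ≤ B''f := le_trans (ContinuousLinearMap.opNorm_nonneg _) (hB''f x ⟨0, hdpos⟩)
  have hfd : Differentiable ℝ f := hf.differentiable (by norm_num)
  have hhd : Differentiable ℝ h := hh.differentiable (by norm_num)
  have hgd : Differentiable ℝ g := hg.differentiable (by norm_num)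
  have hf' : Differentiable ℝ (fderiv ℝ f) :=
    (hf.fderiv_right (m := 1) (by norm_num)).differentiable (by norm_num)
  have hh' : Differentiable ℝ (fderiv ℝ h) :=
    (hh.fderiv_right (m := 1) (by norm_num)).differentiable (by norm_num)
  have hg' : Differentiable ℝ (fderiv ℝ g) :=
    (hg.fderiv_right (m := 1) (by norm_num)).differentiable (by norm_num)
  have hB'g' : ∀ z, ‖fderiv ℝ g z‖ ≤ B'g := by
    intro z
    have := hB'g z
    simp only [gradient] at this
    rwa [LinearIsometryEquiv.norm_map] at this
  -- chain rule identities
  have hid1 : ∀ z, (fderiv ℝ f (h z)).comp (fderiv ℝ h z)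
      = ContinuousLinearMap.id ℝ (EuclideanSpace ℝ (Fin d)) := by
    intro z
    have h1 : fderiv ℝ (f ∘ h) z = (fderiv ℝ f (h z)).comp (fderiv ℝ h z) :=
      fderiv_comp z (hfd _) (hhd _)
    have h2 : f ∘ h = id := funext hright
    rw [← h1, h2, fderiv_id]
  have hid2 : ∀ y, (fderiv ℝ h (f y)).comp (fderiv ℝ f y)
      = ContinuousLinearMap.id ℝ (EuclideanSpace ℝ (Fin d)) := by
    intro y
    have h1 : fderiv ℝ (h ∘ f) y = (fderiv ℝ h (f y)).comp (fderiv ℝ f y) :=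
      fderiv_comp y (hhd _) (hfd _)
    have h2 : h ∘ f = id := funext hleft
    rw [← h1, h2, fderiv_id]
  -- componentwise second derivative of f
  have hcomp : ∀ (c : Fin d) z (w v : EuclideanSpace ℝ (Fin d)),
      fderiv ℝ (fderiv ℝ f) z w v c = fderiv ℝ (fderiv ℝ (fun w => f w c)) z w v := by
    intro c z w v
    have e1 : fderiv ℝ (fun w => f w c)
        = fun y => (EuclideanSpace.proj (𝕜 := ℝ) c).comp (fderiv ℝ f y) := by
      funext y
      exact ((EuclideanSpace.proj (𝕜 := ℝ) c).hasFDerivAt.comp y (hfd y).hasFDerivAt).fderiv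
    have e2 : HasFDerivAt
        (fun y => (EuclideanSpace.proj (𝕜 := ℝ) c).comp (fderiv ℝ f y))
        (((ContinuousLinearMap.compL ℝ (EuclideanSpace ℝ (Fin d)) (EuclideanSpace ℝ (Fin d)) ℝ)
            (EuclideanSpace.proj (𝕜 := ℝ) c)).comp (fderiv ℝ (fderiv ℝ f) z)) z :=
      ((ContinuousLinearMap.compL ℝ (EuclideanSpace ℝ (Fin d)) (EuclideanSpace ℝ (Fin d)) ℝ)
          (EuclideanSpace.proj (𝕜 := ℝ) c)).hasFDerivAt.comp z (hf' z).hasFDerivAt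
    rw [e1, e2.fderiv]
    rfl
  have hsqrtd : (0:ℝ) ≤ Real.sqrt d := Real.sqrt_nonneg _
  -- pointwise bound for the second derivative of f
  have hD2f : ∀ z (w v : EuclideanSpace ℝ (Fin d)),
      ‖fderiv ℝ (fderiv ℝ f) z w v‖ ≤ Real.sqrt d * B''f * ‖w‖ * ‖v‖ := by
    intro z w v
    have key : ∀ c : Fin d, |fderiv ℝ (fderiv ℝ f) z w v c| ≤ B''f * ‖w‖ * ‖v‖ := by
      intro c
      rw [hcomp c z w v]
      calc |fderiv ℝ (fderiv ℝ (fun w => f w c)) z w v|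
          ≤ ‖fderiv ℝ (fderiv ℝ (fun w => f w c)) z w‖ * ‖v‖ :=
            (fderiv ℝ (fderiv ℝ (fun w => f w c)) z w).le_opNorm v
        _ ≤ ‖fderiv ℝ (fderiv ℝ (fun w => f w c)) z‖ * ‖w‖ * ‖v‖ := by
            gcongr
            exact (fderiv ℝ (fderiv ℝ (fun w => f w c)) z).le_opNorm w
        _ ≤ B''f * ‖w‖ * ‖v‖ := by gcongr; exact hB''f z c
    have hb0 : 0 ≤ B''f * ‖w‖ * ‖v‖ :=
      mul_nonneg (mul_nonneg hB''f0 (norm_nonneg _)) (norm_nonneg _)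
    rw [EuclideanSpace.norm_eq]
    calc Real.sqrt (∑ c, ‖fderiv ℝ (fderiv ℝ f) z w v c‖ ^ 2)
        ≤ Real.sqrt (∑ _c : Fin d, (B''f * ‖w‖ * ‖v‖) ^ 2) := by
          apply Real.sqrt_le_sqrt
          apply Finset.sum_le_sum
          intro c _
          rw [Real.norm_eq_abs]
          exact pow_le_pow_left₀ (abs_nonneg _) (key c) 2
      _ = Real.sqrt (d * (B''f * ‖w‖ * ‖v‖) ^ 2) := by
          simp [Finset.sum_const, Finset.card_univ, nsmul_eq_mul]
      _ = Real.sqrt d * (B''f * ‖w‖ * ‖v‖) := by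
          rw [Real.sqrt_mul (Nat.cast_nonneg d), Real.sqrt_sq hb0]
      _ = Real.sqrt d * B''f * ‖w‖ * ‖v‖ := by ring
  have hD2fop : ∀ z (w : EuclideanSpace ℝ (Fin d)),
      ‖fderiv ℝ (fderiv ℝ f) z w‖ ≤ Real.sqrt d * B''f * ‖w‖ := by
    intro z w
    apply ContinuousLinearMap.opNorm_le_bound _
      (mul_nonneg (mul_nonneg hsqrtd hB''f0) (norm_nonneg _))
    intro v
    exact hD2f z w v
  -- bound on the second derivative of h
  have hD2h : ∀ w' : EuclideanSpace ℝ (Fin d),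
      ‖fderiv ℝ (fderiv ℝ h) x w'‖
        ≤ B'f * (Real.sqrt d * B''f * (B'f * ‖w'‖)) * B'f := by
    intro w'
    have hfx : f (h x) = x := hright x
    have hc : HasFDerivAt (fun y => fderiv ℝ h (f y))
        ((fderiv ℝ (fderiv ℝ h) x).comp (fderiv ℝ f (h x))) (h x) := by
      have := (hh' (f (h x))).hasFDerivAt.comp (h x) (hfd (h x)).hasFDerivAt
      rw [hfx] at this
      exact this
    have hdd : HasFDerivAt (fderiv ℝ f) (fderiv ℝ (fderiv ℝ f) (h x)) (h x) :=
      (hf' _).hasFDerivAt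
    have htot := hc.clm_comp hdd
    have hzero : HasFDerivAt (fun y => (fderiv ℝ h (f y)).comp (fderiv ℝ f y))
        (0 : EuclideanSpace ℝ (Fin d) →L[ℝ]
          (EuclideanSpace ℝ (Fin d) →L[ℝ] EuclideanSpace ℝ (Fin d))) (h x) := by
      have hconst : (fun y => (fderiv ℝ h (f y)).comp (fderiv ℝ f y))
          = fun _ => ContinuousLinearMap.id ℝ (EuclideanSpace ℝ (Fin d)) := funext hid2
      rw [hconst]
      exact hasFDerivAt_const _ _
    have heq0 := htot.unique hzero
    have happ := DFunLike.congr_fun heq0 (fderiv ℝ h x w')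
    simp only [ContinuousLinearMap.add_apply, ContinuousLinearMap.coe_comp',
      Function.comp_apply, ContinuousLinearMap.compL_apply, ContinuousLinearMap.flip_apply,
      ContinuousLinearMap.zero_apply] at happ
    have hu : fderiv ℝ f (h x) (fderiv ℝ h x w') = w' := by
      have := DFunLike.congr_fun (hid1 x) w'
      simpa using this
    rw [hfx, hu] at happ
    -- happ : (Dh x).comp (D2f (h x) (Dh x w')) + (D2h x w').comp (Df (h x)) = 0
    have hD2hw : fderiv ℝ (fderiv ℝ h) x w'
        = -(((fderiv ℝ h x).comp
            ((fderiv ℝ (fderiv ℝ f) (h x)) ((fderiv ℝ h x) w'))).comp (fderiv ℝ h x)) := by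
      have e : (fderiv ℝ (fderiv ℝ h) x w').comp (fderiv ℝ f (h x))
          = -((fderiv ℝ h x).comp
              ((fderiv ℝ (fderiv ℝ f) (h x)) ((fderiv ℝ h x) w'))) :=
        eq_neg_of_add_eq_zero_left (by rw [add_comm]; exact happ)
      calc fderiv ℝ (fderiv ℝ h) x w'
          = ((fderiv ℝ (fderiv ℝ h) x w').comp (fderiv ℝ f (h x))).comp (fderiv ℝ h x) := by
            rw [ContinuousLinearMap.comp_assoc, hid1 x, ContinuousLinearMap.comp_id]
        _ = _ := by rw [e, ContinuousLinearMap.neg_comp]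
    rw [hD2hw, norm_neg]
    have nA : ‖fderiv ℝ h x‖ ≤ B'f := hB'f x
    have nD2fu : ‖fderiv ℝ (fderiv ℝ f) (h x) (fderiv ℝ h x w')‖
        ≤ Real.sqrt d * B''f * (B'f * ‖w'‖) := by
      refine le_trans (hD2fop (h x) (fderiv ℝ h x w')) ?_
      exact mul_le_mul_of_nonneg_left
        (le_trans ((fderiv ℝ h x).le_opNorm w')
          (mul_le_mul_of_nonneg_right nA (norm_nonneg _)))
        (mul_nonneg hsqrtd hB''f0)
    calc ‖((fderiv ℝ h x).comp
            ((fderiv ℝ (fderiv ℝ f) (h x)) ((fderiv ℝ h x) w'))).comp (fderiv ℝ h x)‖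
        ≤ ‖(fderiv ℝ h x).comp
            ((fderiv ℝ (fderiv ℝ f) (h x)) ((fderiv ℝ h x) w'))‖ * ‖fderiv ℝ h x‖ :=
          ContinuousLinearMap.opNorm_comp_le _ _
      _ ≤ (‖fderiv ℝ h x‖ * ‖fderiv ℝ (fderiv ℝ f) (h x) ((fderiv ℝ h x) w')‖)
            * ‖fderiv ℝ h x‖ := by
          gcongr
          exact ContinuousLinearMap.opNorm_comp_le _ _
      _ ≤ B'f * (Real.sqrt d * B''f * (B'f * ‖w'‖)) * B'f := by
          apply mul_le_mul _ nA (norm_nonneg _)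
          · exact mul_nonneg hB'f0
              (mul_nonneg (mul_nonneg hsqrtd hB''f0)
                (mul_nonneg hB'f0 (norm_nonneg _)))
          · exact mul_le_mul nA nD2fu (norm_nonneg _) hB'f0
  -- first derivative of g ∘ h
  have hghd : fderiv ℝ (g ∘ h) = fun y => (fderiv ℝ g (h y)).comp (fderiv ℝ h y) :=
    funext fun y => fderiv_comp y (hgd _) (hhd _)
  rw [hghd]
  have hc2 : HasFDerivAt (fun y => fderiv ℝ g (h y))
      ((fderiv ℝ (fderiv ℝ g) (h x)).comp (fderiv ℝ h x)) x :=
    (hg' (h x)).hasFDerivAt.comp x (hhd x).hasFDerivAt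
  have hd2 : HasFDerivAt (fderiv ℝ h) (fderiv ℝ (fderiv ℝ h) x) x := (hh' x).hasFDerivAt
  have htot2 := hc2.clm_comp hd2
  rw [htot2.fderiv]
  have hsd : Real.sqrt d ≤ (d:ℝ) := by
    have h1 : (d:ℝ) ≤ (d:ℝ) ^ 2 := by
      have := Nat.le_self_pow (two_ne_zero) d
      exact_mod_cast this
    calc Real.sqrt d ≤ Real.sqrt ((d:ℝ)^2) := Real.sqrt_le_sqrt h1
      _ = d := Real.sqrt_sq (Nat.cast_nonneg d)
  have hM0 : 0 ≤ B'f ^ 2 * (B''g + d * B'f * B''f * B'g) := by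
    apply mul_nonneg (pow_nonneg hB'f0 2)
    have : (0:ℝ) ≤ (d:ℝ) * B'f * B''f * B'g :=
      mul_nonneg (mul_nonneg (mul_nonneg (Nat.cast_nonneg d) hB'f0) hB''f0) hB'g0
    linarith
  apply ContinuousLinearMap.opNorm_le_bound _ hM0
  intro w
  simp only [ContinuousLinearMap.add_apply, ContinuousLinearMap.coe_comp',
    Function.comp_apply, ContinuousLinearMap.compL_apply, ContinuousLinearMap.flip_apply]
  have n1 : ‖(fderiv ℝ g (h x)).comp (fderiv ℝ (fderiv ℝ h) x w)‖
      ≤ B'g * (B'f * (Real.sqrt d * B''f * (B'f * ‖w‖)) * B'f) :=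
    le_trans (ContinuousLinearMap.opNorm_comp_le _ _)
      (mul_le_mul (hB'g' _) (hD2h w) (norm_nonneg _) hB'g0)
  have n2 : ‖((fderiv ℝ (fderiv ℝ g) (h x)) (fderiv ℝ h x w)).comp (fderiv ℝ h x)‖
      ≤ (B''g * (B'f * ‖w‖)) * B'f := by
    refine le_trans (ContinuousLinearMap.opNorm_comp_le _ _) ?_
    apply mul_le_mul _ (hB'f x) (norm_nonneg _)
      (mul_nonneg hB''g0 (mul_nonneg hB'f0 (norm_nonneg _)))
    calc ‖fderiv ℝ (fderiv ℝ g) (h x) (fderiv ℝ h x w)‖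
        ≤ ‖fderiv ℝ (fderiv ℝ g) (h x)‖ * ‖fderiv ℝ h x w‖ :=
          (fderiv ℝ (fderiv ℝ g) (h x)).le_opNorm _
      _ ≤ B''g * (B'f * ‖w‖) := by
          apply mul_le_mul (hB''g _ ) _ (norm_nonneg _) hB''g0
          exact le_trans ((fderiv ℝ h x).le_opNorm w)
            (mul_le_mul_of_nonneg_right (hB'f x) (norm_nonneg _))
  calc ‖(fderiv ℝ g (h x)).comp (fderiv ℝ (fderiv ℝ h) x w)
        + ((fderiv ℝ (fderiv ℝ g) (h x)) (fderiv ℝ h x w)).comp (fderiv ℝ h x)‖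
      ≤ ‖(fderiv ℝ g (h x)).comp (fderiv ℝ (fderiv ℝ h) x w)‖
        + ‖((fderiv ℝ (fderiv ℝ g) (h x)) (fderiv ℝ h x w)).comp (fderiv ℝ h x)‖ :=
        norm_add_le _ _
    _ ≤ B'g * (B'f * (Real.sqrt d * B''f * (B'f * ‖w‖)) * B'f) + (B''g * (B'f * ‖w‖)) * B'f :=
        add_le_add n1 n2
    _ ≤ B'f ^ 2 * (B''g + d * B'f * B''f * B'g) * ‖w‖ := by
        have key := mul_le_mul_of_nonneg_right hsd
          (mul_nonneg (mul_nonneg (mul_nonneg (mul_nonneg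
            (mul_nonneg hB'f0 hB'f0) hB'f0) hB''f0) hB'g0) (norm_nonneg w))
        nlinarith [key]
end

section
/- Let f : ℝ^d → ℝ^d be a C² diffeomorphism with h := f⁻¹, let g : ℝ^d → ℝ be continuously differentiable, and let p : ℝ^d → (0,∞) be continuously differentiable. Suppose ‖Dh(x)‖₂ ≤ B′_f for all x, ‖Hess f_c(z)‖₂ ≤ B″_f for all z and all c, ‖∇g(z)‖₂ ≤ B′_g for all z, and ‖∇ log p(z)‖₂ ≤ B′_{log p} for all z. Then for all x ∈ ℝ^d: |∇(g ∘ h)(x)ᵀ · ( ∇(log p ∘ h)(x) + ∇ log|det Dh(x)| )| ≤ ( B′_{log p} + d · B′_f · B″_f ) · B′_f² · B′_g. -/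
noncomputable def detCM (d : ℕ) : ContinuousMultilinearMap ℝ (fun _ : Fin d => (Fin d → ℝ)) ℝ :=
  MultilinearMap.mkContinuous
    (Matrix.detRowAlternating (R := ℝ) (n := Fin d)).toMultilinearMap
    (Nat.factorial d : ℝ) (fun m => by
      classical
      simp only [AlternatingMap.coe_multilinearMap, Matrix.detRowAlternating]
      calc ‖Matrix.det (Matrix.of m)‖
          ≤ ∑ σ : Equiv.Perm (Fin d), ‖(Equiv.Perm.sign σ : ℤ) • ∏ i, m (σ i) i‖ := by
            rw [Matrix.det_apply]; exact norm_sum_le _ _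
        _ ≤ ∑ σ : Equiv.Perm (Fin d), ∏ i, ‖m i‖ := by
            refine Finset.sum_le_sum fun σ _ => ?_
            have hs : ‖(Equiv.Perm.sign σ : ℤ) • ∏ i, m (σ i) i‖ = ‖∏ i, m (σ i) i‖ := by
              rcases Int.units_eq_one_or (Equiv.Perm.sign σ) with h | h <;> simp [h]
            rw [hs]
            calc ‖∏ i, m (σ i) i‖
                ≤ ∏ i, ‖m (σ i) i‖ := by
                  rw [Real.norm_eq_abs, Finset.abs_prod]
                  exact le_of_eq (by simp [Real.norm_eq_abs])
              _ ≤ ∏ i, ‖m (σ i)‖ := by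
                  refine Finset.prod_le_prod (fun _ _ => norm_nonneg _) fun i _ =>
                    norm_le_pi_norm (m (σ i)) i
              _ = ∏ i, ‖m i‖ := Equiv.prod_comp σ fun i => ‖m i‖
        _ = (Nat.factorial d : ℝ) * ∏ i, ‖m i‖ := by
            rw [Finset.sum_const, Finset.card_univ, Fintype.card_perm, Fintype.card_fin,
              nsmul_eq_mul]
      )

lemma detCM_apply {d : ℕ} (m : Fin d → Fin d → ℝ) : detCM d m = Matrix.det (Matrix.of m) := by
  rw [detCM, Matrix.det]
  exact congrFun (MultilinearMap.coe_mkContinuous _ _ _) m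

noncomputable def rowsL (d : ℕ) :
    (EuclideanSpace ℝ (Fin d) →L[ℝ] EuclideanSpace ℝ (Fin d)) →L[ℝ] (Fin d → Fin d → ℝ) :=
  ContinuousLinearMap.pi (fun i => ContinuousLinearMap.pi (fun j =>
    (EuclideanSpace.proj i).comp (ContinuousLinearMap.apply ℝ _ (EuclideanSpace.single j 1))))

lemma rowsL_apply {d : ℕ} (A : EuclideanSpace ℝ (Fin d) →L[ℝ] EuclideanSpace ℝ (Fin d))
    (i j : Fin d) : rowsL d A i j = A (EuclideanSpace.single j 1) i := rfl

lemma det_eq_rows {d : ℕ} (A : EuclideanSpace ℝ (Fin d) →L[ℝ] EuclideanSpace ℝ (Fin d)) :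
    Matrix.det (Matrix.of (rowsL d A)) = A.det := by
  have hb : LinearMap.toMatrix (EuclideanSpace.basisFun (Fin d) ℝ).toBasis
      (EuclideanSpace.basisFun (Fin d) ℝ).toBasis (A : EuclideanSpace ℝ (Fin d) →ₗ[ℝ] _)
      = Matrix.of (rowsL d A) := by
    ext i j
    rw [LinearMap.toMatrix_apply]
    simp [OrthonormalBasis.coe_toBasis, OrthonormalBasis.coe_toBasis_repr_apply,
      EuclideanSpace.basisFun_apply, EuclideanSpace.basisFun_repr, rowsL_apply]
  rw [← hb, LinearMap.det_toMatrix]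

lemma jacobi_row {d : ℕ} (A C : Matrix (Fin d) (Fin d) ℝ) (hAC : A * C = 1)
    (r : Fin d → ℝ) (c : Fin d) :
    (A.det)⁻¹ * (A.updateRow c r).det = ∑ j, C j c * r j := by
  have hC : C = A⁻¹ := (Matrix.inv_eq_right_inv hAC).symm
  have hunit : IsUnit A.det := Matrix.isUnit_det_of_right_inverse hAC
  have hinv : A⁻¹ = (A.det)⁻¹ • A.adjugate := by
    rw [Matrix.inv_def, Ring.inverse_eq_inv']
  rw [← Matrix.cramer_transpose_apply, Matrix.cramer_eq_adjugate_mulVec,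
    ← Matrix.adjugate_transpose]
  rw [Matrix.mulVec, dotProduct]
  rw [Finset.mul_sum]
  refine Finset.sum_congr rfl fun j _ => ?_
  rw [hC, hinv]
  simp [Matrix.transpose_apply, Matrix.smul_apply, smul_eq_mul]
  ring

lemma rowsL_toMatrix {d : ℕ} (A : EuclideanSpace ℝ (Fin d) →L[ℝ] EuclideanSpace ℝ (Fin d)) :
    LinearMap.toMatrix (EuclideanSpace.basisFun (Fin d) ℝ).toBasis
      (EuclideanSpace.basisFun (Fin d) ℝ).toBasis (A : EuclideanSpace ℝ (Fin d) →ₗ[ℝ] _)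
      = Matrix.of (rowsL d A) := by
  ext i j
  rw [LinearMap.toMatrix_apply]
  simp [OrthonormalBasis.coe_toBasis, OrthonormalBasis.coe_toBasis_repr_apply,
    EuclideanSpace.basisFun_apply, EuclideanSpace.basisFun_repr, rowsL_apply]

lemma clm_expand {d : ℕ} (T : EuclideanSpace ℝ (Fin d) →L[ℝ] ℝ) (v : EuclideanSpace ℝ (Fin d)) :
    T v = ∑ j, v j * T (EuclideanSpace.single j 1) := by
  have hv : (∑ j, v j • EuclideanSpace.single j (1:ℝ)) = v := by
    have := ((EuclideanSpace.basisFun (Fin d) ℝ).toBasis).sum_repr v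
    simpa [OrthonormalBasis.coe_toBasis, OrthonormalBasis.coe_toBasis_repr_apply,
      EuclideanSpace.basisFun_apply, EuclideanSpace.basisFun_repr] using this
  conv_lhs => rw [← hv]
  rw [map_sum]
  simp [smul_eq_mul]

lemma logdet_hasFDeriv {d : ℕ} (f h : EuclideanSpace ℝ (Fin d) → EuclideanSpace ℝ (Fin d))
    (hf : ContDiff ℝ 2 f) (hh : ContDiff ℝ 2 h)
    (hleft : Function.LeftInverse h f) (hright : Function.RightInverse h f)
    (x : EuclideanSpace ℝ (Fin d)) :
    ∃ L : EuclideanSpace ℝ (Fin d) →L[ℝ] ℝ,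
      HasFDerivAt (fun y => Real.log |(fderiv ℝ h y).det|) L x ∧
      ∀ w, L w = -∑ c, (fderiv ℝ (fderiv ℝ (fun z => f z c)) (h x)
          ((fderiv ℝ h x) w)) ((fderiv ℝ h x) (EuclideanSpace.single c 1)) := by
  classical
  have hfd : Differentiable ℝ f := hf.differentiable (by norm_num)
  have hhd : Differentiable ℝ h := hh.differentiable (by norm_num)
  -- chain rule identities
  have hid1 : ∀ y, (fderiv ℝ f (h y)).comp (fderiv ℝ h y) = ContinuousLinearMap.id ℝ (EuclideanSpace ℝ (Fin d)) := by
    intro y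
    have h1 : fderiv ℝ (f ∘ h) y = (fderiv ℝ f (h y)).comp (fderiv ℝ h y) :=
      fderiv_comp y (hfd (h y)) (hhd y)
    rw [hright.comp_eq_id] at h1
    rw [← h1, fderiv_id]
  have hid2 : ∀ z, (fderiv ℝ h (f z)).comp (fderiv ℝ f z) = ContinuousLinearMap.id ℝ (EuclideanSpace ℝ (Fin d)) := by
    intro z
    have h1 : fderiv ℝ (h ∘ f) z = (fderiv ℝ h (f z)).comp (fderiv ℝ f z) :=
      fderiv_comp z (hhd (f z)) (hfd z)
    rw [hleft.comp_eq_id] at h1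
    rw [← h1, fderiv_id]
  -- determinant identities
  have hdetmul : ∀ y, (fderiv ℝ f (h y)).det * (fderiv ℝ h y).det = 1 := by
    intro y
    have h2 : ((fderiv ℝ f (h y)).comp (fderiv ℝ h y)).det = 1 := by
      rw [hid1 y]
      show LinearMap.det _ = 1
      rw [ContinuousLinearMap.coe_id, LinearMap.det_id]
    rw [← h2]
    exact (LinearMap.det_comp _ _).symm
  have hdetinv : ∀ y, ((fderiv ℝ f (h y)).det)⁻¹ = (fderiv ℝ h y).det := fun y =>
    inv_eq_of_mul_eq_one_right (hdetmul y)
  have hdetne : ∀ y, (fderiv ℝ f (h y)).det ≠ 0 := fun y =>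
    left_ne_zero_of_mul_eq_one (hdetmul y)
  -- rewrite target function
  have hfun : (fun y => Real.log |(fderiv ℝ h y).det|)
      = fun y => -Real.log (detCM d (fun i => rowsL d (fderiv ℝ f (h y)) i)) := by
    funext y
    have : detCM d (fun i => rowsL d (fderiv ℝ f (h y)) i) = (fderiv ℝ f (h y)).det := by
      rw [detCM_apply, det_eq_rows]
    rw [this, Real.log_abs, ← hdetinv y, Real.log_inv]
  -- derivative of fderiv f
  set z₀ := h x with hz₀
  have hC1 : ContDiff ℝ 1 (fderiv ℝ f) := hf.fderiv_right (by norm_num)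
  have hF'' : HasFDerivAt (fderiv ℝ f) (fderiv ℝ (fderiv ℝ f) z₀) z₀ :=
    ((hC1.differentiable (by norm_num)) z₀).hasFDerivAt
  set F'' := fderiv ℝ (fderiv ℝ f) z₀ with hF''def
  -- rows are differentiable
  have hg : ∀ i : Fin d, HasFDerivAt (fun z => rowsL d (fderiv ℝ f z) i)
      ((ContinuousLinearMap.proj i).comp ((rowsL d).comp F'')) z₀ :=
    fun i => by
      exact (ContinuousLinearMap.proj i).hasFDerivAt.comp z₀
        ((rowsL d).hasFDerivAt.comp z₀ hF'')
  have hdet' := HasFDerivAt.multilinear_comp (detCM d) hg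
  set D := (∑ i : Fin d, ((detCM d).toContinuousLinearMap
      (fun j => rowsL d (fderiv ℝ f z₀) j) i) ∘L
      ((ContinuousLinearMap.proj i).comp ((rowsL d).comp F''))) with hD
  set detval := detCM d (fun i => rowsL d (fderiv ℝ f z₀) i) with hdetval
  have hdetvalne : detval ≠ 0 := by
    rw [hdetval, detCM_apply, det_eq_rows]
    exact hdetne x
  have hlog : HasFDerivAt (fun z => Real.log (detCM d (fun i => rowsL d (fderiv ℝ f z) i)))
      (detval⁻¹ • D) z₀ :=
    by have := (Real.hasDerivAt_log hdetvalne).comp_hasFDerivAt z₀ hdet'; exact this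
  have hcomp : HasFDerivAt (fun y => Real.log (detCM d (fun i => rowsL d (fderiv ℝ f (h y)) i)))
      ((detval⁻¹ • D).comp (fderiv ℝ h x)) x := by
    have := hlog.comp x (hhd x).hasFDerivAt
    exact this
  refine ⟨-((detval⁻¹ • D).comp (fderiv ℝ h x)), by rw [hfun]; exact hcomp.neg, ?_⟩
  -- the formula
  intro w
  set u := (fderiv ℝ h x) w with hu
  have hDu : D u = ∑ c, Matrix.det ((Matrix.of (rowsL d (fderiv ℝ f z₀))).updateRow c
      (rowsL d (F'' u) c)) := by
    rw [hD, ContinuousLinearMap.sum_apply]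
    refine Finset.sum_congr rfl fun c _ => ?_
    rw [ContinuousLinearMap.comp_apply, ContinuousMultilinearMap.toContinuousLinearMap_apply,
      detCM_apply]
    rfl
  have hAC : (Matrix.of (rowsL d (fderiv ℝ f z₀))) * (Matrix.of (rowsL d (fderiv ℝ h x))) = 1 := by
    have h3 := congrArg ContinuousLinearMap.toLinearMap (hid1 x)
    rw [ContinuousLinearMap.toLinearMap_comp, ContinuousLinearMap.coe_id] at h3
    rw [← rowsL_toMatrix, ← rowsL_toMatrix, ← LinearMap.toMatrix_comp, ← hz₀] at *
    rw [h3, LinearMap.toMatrix_id]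
  have hjac : ∀ c, detval⁻¹ * Matrix.det ((Matrix.of (rowsL d (fderiv ℝ f z₀))).updateRow c
      (rowsL d (F'' u) c))
      = ∑ j, rowsL d (fderiv ℝ h x) j c * rowsL d (F'' u) c j := by
    intro c
    have hjr := jacobi_row (Matrix.of (rowsL d (fderiv ℝ f z₀)))
      (Matrix.of (rowsL d (fderiv ℝ h x))) hAC (rowsL d (F'' u) c) c
    have hdv : detval = (Matrix.of (rowsL d (fderiv ℝ f z₀))).det := by
      rw [hdetval, detCM_apply]
    rw [hdv]
    exact hjr
  have hproj : ∀ (c : Fin d) (z : EuclideanSpace ℝ (Fin d)), fderiv ℝ (fun w => f w c) z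
      = (EuclideanSpace.proj (𝕜 := ℝ) c).comp (fderiv ℝ f z) := by
    intro c z
    have : HasFDerivAt (fun w => f w c)
        ((EuclideanSpace.proj (𝕜 := ℝ) c).comp (fderiv ℝ f z)) z := by
      exact (EuclideanSpace.proj (𝕜 := ℝ) c).hasFDerivAt.comp z (hfd z).hasFDerivAt
    exact this.fderiv
  have hHess : ∀ (c : Fin d) (v w' : EuclideanSpace ℝ (Fin d)),
      (fderiv ℝ (fderiv ℝ (fun w => f w c)) z₀ v) w' = (F'' v w') c := by
    intro c v w'
    set Pc := ContinuousLinearMap.compL ℝ (EuclideanSpace ℝ (Fin d)) (EuclideanSpace ℝ (Fin d)) ℝ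
      (EuclideanSpace.proj (𝕜 := ℝ) c) with hPc
    have h4 : (fderiv ℝ (fun w => f w c)) = fun z => Pc (fderiv ℝ f z) := by
      funext z
      rw [hproj c z, hPc]
      rfl
    have h5 : HasFDerivAt (fun z => Pc (fderiv ℝ f z)) (Pc.comp F'') z₀ :=
      Pc.hasFDerivAt.comp z₀ hF''
    have h6 : fderiv ℝ (fderiv ℝ (fun w => f w c)) z₀ = Pc.comp F'' := by
      rw [h4]
      exact h5.fderiv
    rw [h6]
    rfl
  have hexp : ∀ c : Fin d, (fderiv ℝ (fderiv ℝ (fun w => f w c)) z₀ u)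
      ((fderiv ℝ h x) (EuclideanSpace.single c 1))
      = ∑ j, ((fderiv ℝ h x) (EuclideanSpace.single c 1)) j
          * (F'' u (EuclideanSpace.single j 1)) c := by
    intro c
    rw [clm_expand]
    exact Finset.sum_congr rfl fun j _ => by rw [hHess]
  have hLHS : (-((detval⁻¹ • D).comp (fderiv ℝ h x))) w = -(detval⁻¹ * D u) := by
    simp [hu, smul_eq_mul]
  rw [hLHS, hDu, Finset.mul_sum, neg_inj]
  refine Finset.sum_congr rfl fun c _ => ?_
  rw [hjac c, hexp c]
  refine Finset.sum_congr rfl fun j _ => ?_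
  rw [rowsL_apply, rowsL_apply]


open scoped RealInnerProductSpace

/-- Bound on `|∇(g∘h)(x)ᵀ · (∇(log p ∘ h)(x) + ∇ log|det Dh(x)|)|` for `h = f⁻¹` the inverse
of a `C²` diffeomorphism, `g` continuously differentiable with `‖∇g‖₂ ≤ B′_g`, and `p`
positive continuously differentiable with `‖∇ log p‖₂ ≤ B′_{log p}`. -/
theorem grad_comp_inner_bound
    {d : ℕ}
    (f h : EuclideanSpace ℝ (Fin d) → EuclideanSpace ℝ (Fin d))
    (g p : EuclideanSpace ℝ (Fin d) → ℝ)
    (hf : ContDiff ℝ 2 f) (hh : ContDiff ℝ 2 h)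
    (hg : ContDiff ℝ 1 g) (hp : ContDiff ℝ 1 p) (hppos : ∀ z, 0 < p z)
    (hleft : Function.LeftInverse h f) (hright : Function.RightInverse h f)
    (B'f B''f B'g B'logp : ℝ)
    (hB'f : ∀ x, ‖fderiv ℝ h x‖ ≤ B'f)
    (hB''f : ∀ (z : EuclideanSpace ℝ (Fin d)) (c : Fin d),
      ‖fderiv ℝ (fderiv ℝ (fun w => f w c)) z‖ ≤ B''f)
    (hB'g : ∀ z, ‖gradient g z‖ ≤ B'g)
    (hB'logp : ∀ z, ‖gradient (fun w => Real.log (p w)) z‖ ≤ B'logp)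
    (x : EuclideanSpace ℝ (Fin d)) :
    |⟪gradient (fun y => g (h y)) x,
        gradient (fun y => Real.log (p (h y))) x +
          gradient (fun y => Real.log |(fderiv ℝ h y).det|) x⟫| ≤
      (B'logp + d * B'f * B''f) * B'f ^ 2 * B'g := by
  have hhd : Differentiable ℝ h := hh.differentiable (by norm_num)
  have hgd : Differentiable ℝ g := hg.differentiable (by norm_num)
  have hpd : Differentiable ℝ p := hp.differentiable (by norm_num)
  have hqd : Differentiable ℝ (fun w => Real.log (p w)) := fun z =>
    (Real.differentiableAt_log (hppos z).ne').comp z (hpd z)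
  have gnorm : ∀ (φ : EuclideanSpace ℝ (Fin d) → ℝ) (y : EuclideanSpace ℝ (Fin d)),
      ‖gradient φ y‖ = ‖fderiv ℝ φ y‖ := fun φ y => by
    rw [gradient]
    exact LinearIsometryEquiv.norm_map _ _
  -- nonnegativity
  have hB'f0 : 0 ≤ B'f := le_trans (norm_nonneg _) (hB'f x)
  have hB'g0 : 0 ≤ B'g := le_trans (norm_nonneg _) (hB'g x)
  have hB'logp0 : 0 ≤ B'logp := le_trans (norm_nonneg _) (hB'logp x)
  have hdB : 0 ≤ (d : ℝ) * B'f * B''f := by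
    rcases Nat.eq_zero_or_pos d with hd | hd
    · simp [hd]
    · have hB''f0 : (0:ℝ) ≤ B''f := le_trans (ContinuousLinearMap.opNorm_nonneg _) (hB''f x ⟨0, hd⟩)
      positivity
  -- bound on gradient of g ∘ h
  have ha : ‖gradient (fun y => g (h y)) x‖ ≤ B'g * B'f := by
    rw [gnorm]
    have hfa : fderiv ℝ (fun y => g (h y)) x = (fderiv ℝ g (h x)).comp (fderiv ℝ h x) :=
      fderiv_comp x (hgd (h x)) (hhd x)
    rw [hfa]
    calc ‖(fderiv ℝ g (h x)).comp (fderiv ℝ h x)‖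
        ≤ ‖fderiv ℝ g (h x)‖ * ‖fderiv ℝ h x‖ := ContinuousLinearMap.opNorm_comp_le _ _
      _ ≤ B'g * B'f := by
          have h1 : ‖fderiv ℝ g (h x)‖ ≤ B'g := by rw [← gnorm]; exact hB'g (h x)
          exact mul_le_mul h1 (hB'f x) (norm_nonneg _) hB'g0
  -- bound on gradient of log p ∘ h
  have hb : ‖gradient (fun y => Real.log (p (h y))) x‖ ≤ B'logp * B'f := by
    rw [gnorm]
    have hfb : fderiv ℝ (fun y => Real.log (p (h y))) x
        = (fderiv ℝ (fun w => Real.log (p w)) (h x)).comp (fderiv ℝ h x) :=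
      fderiv_comp x (hqd (h x)) (hhd x)
    rw [hfb]
    calc ‖(fderiv ℝ (fun w => Real.log (p w)) (h x)).comp (fderiv ℝ h x)‖
        ≤ ‖fderiv ℝ (fun w => Real.log (p w)) (h x)‖ * ‖fderiv ℝ h x‖ :=
          ContinuousLinearMap.opNorm_comp_le _ _
      _ ≤ B'logp * B'f := by
          have h1 : ‖fderiv ℝ (fun w => Real.log (p w)) (h x)‖ ≤ B'logp := by
            rw [← gnorm]; exact hB'logp (h x)
          exact mul_le_mul h1 (hB'f x) (norm_nonneg _) hB'logp0
  -- bound on gradient of log |det Dh|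
  obtain ⟨L, hL, hLw⟩ := logdet_hasFDeriv f h hf hh hleft hright x
  have hc : ‖gradient (fun y => Real.log |(fderiv ℝ h y).det|) x‖ ≤ ((d:ℝ) * B'f * B''f) * B'f := by
    rw [gnorm, hL.fderiv]
    refine ContinuousLinearMap.opNorm_le_bound _ (mul_nonneg hdB hB'f0) fun w => ?_
    rw [Real.norm_eq_abs, hLw w, abs_neg]
    have hterm : ∀ c : Fin d,
        |(fderiv ℝ (fderiv ℝ (fun z => f z c)) (h x) ((fderiv ℝ h x) w))
          ((fderiv ℝ h x) (EuclideanSpace.single c 1))|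
        ≤ (B''f * (B'f * ‖w‖)) * B'f := by
      intro c
      have e1 : ‖(fderiv ℝ h x) w‖ ≤ B'f * ‖w‖ :=
        le_trans ((fderiv ℝ h x).le_opNorm w)
          (mul_le_mul_of_nonneg_right (hB'f x) (norm_nonneg _))
      have e2 : ‖(fderiv ℝ h x) (EuclideanSpace.single c 1)‖ ≤ B'f := by
        refine le_trans ((fderiv ℝ h x).le_opNorm _) ?_
        rw [EuclideanSpace.norm_single, norm_one, mul_one]
        exact hB'f x
      have e3 : ‖fderiv ℝ (fderiv ℝ (fun z => f z c)) (h x) ((fderiv ℝ h x) w)‖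
          ≤ B''f * (B'f * ‖w‖) := by
        refine le_trans ((fderiv ℝ (fderiv ℝ (fun z => f z c)) (h x)).le_opNorm _) ?_
        have := hB''f (h x) c
        exact mul_le_mul this e1 (norm_nonneg _) (le_trans (ContinuousLinearMap.opNorm_nonneg _) this)
      calc |(fderiv ℝ (fderiv ℝ (fun z => f z c)) (h x) ((fderiv ℝ h x) w))
            ((fderiv ℝ h x) (EuclideanSpace.single c 1))|
          ≤ ‖fderiv ℝ (fderiv ℝ (fun z => f z c)) (h x) ((fderiv ℝ h x) w)‖
            * ‖(fderiv ℝ h x) (EuclideanSpace.single c 1)‖ := by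
            rw [← Real.norm_eq_abs]
            exact ContinuousLinearMap.le_opNorm _ _
        _ ≤ (B''f * (B'f * ‖w‖)) * B'f :=
            mul_le_mul e3 e2 (norm_nonneg _)
              (by
                have hB2 := le_trans (ContinuousLinearMap.opNorm_nonneg _) (hB''f x c)
                positivity)
    calc |∑ c : Fin d, (fderiv ℝ (fderiv ℝ (fun z => f z c)) (h x) ((fderiv ℝ h x) w))
          ((fderiv ℝ h x) (EuclideanSpace.single c 1))|
        ≤ ∑ c : Fin d, |(fderiv ℝ (fderiv ℝ (fun z => f z c)) (h x) ((fderiv ℝ h x) w))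
          ((fderiv ℝ h x) (EuclideanSpace.single c 1))| := Finset.abs_sum_le_sum_abs _ _
      _ ≤ ∑ _c : Fin d, (B''f * (B'f * ‖w‖)) * B'f := Finset.sum_le_sum fun c _ => hterm c
      _ = ((d:ℝ) * B'f * B''f) * B'f * ‖w‖ := by
          rw [Finset.sum_const, Finset.card_univ, Fintype.card_fin, nsmul_eq_mul]
          ring
  -- combine
  calc |⟪gradient (fun y => g (h y)) x,
        gradient (fun y => Real.log (p (h y))) x +
          gradient (fun y => Real.log |(fderiv ℝ h y).det|) x⟫|
      ≤ ‖gradient (fun y => g (h y)) x‖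
        * ‖gradient (fun y => Real.log (p (h y))) x +
            gradient (fun y => Real.log |(fderiv ℝ h y).det|) x‖ :=
        abs_real_inner_le_norm _ _
    _ ≤ ‖gradient (fun y => g (h y)) x‖
        * (‖gradient (fun y => Real.log (p (h y))) x‖ +
            ‖gradient (fun y => Real.log |(fderiv ℝ h y).det|) x‖) :=
        mul_le_mul_of_nonneg_left (norm_add_le _ _) (norm_nonneg _)
    _ ≤ (B'g * B'f) * (B'logp * B'f + ((d:ℝ) * B'f * B''f) * B'f) := by
        refine mul_le_mul ha (add_le_add hb hc) ?_ (by positivity)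
        positivity
    _ = (B'logp + d * B'f * B''f) * B'f ^ 2 * B'g := by ring
end

section
/- Let p, q : ℝ^d → (0,∞) be twice continuously differentiable, with q a probability density (∫ q = 1). Assume the functions q·‖∇ log p‖₂², q·‖∇ log q‖₂², q·|Δ log p| and q·|Δ log q| are Lebesgue integrable, and that ∫_{ℝ^d} div( q(z)·∇ log p(z) ) dz = 0 and ∫_{ℝ^d} Δq(z) dz = 0. Then ∫_{ℝ^d} q(z)·‖∇ log p(z) − ∇ log q(z)‖₂² dz = ∫_{ℝ^d} q(z)·( 2·Δ log p(z) − Δ log q(z) + ‖∇ log p(z)‖₂² ) dz. (This is the score-matching reformulation of the Fisher divergence used in the paper's out-of-distribution generalization bound.) -/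
/-!
Write `P = log p`, `Q = log q`. Since `∇q = q ∇Q`, the product rule gives
`div (q ∇P) = q ⟪∇Q, ∇P⟫ + q ΔP` and `Δq = div (q ∇Q) = q ‖∇Q‖² + q ΔQ`. Expanding the square,
`q ‖∇P - ∇Q‖² = q (2 ΔP - ΔQ + ‖∇P‖²) + Δq - 2 div (q ∇P)` pointwise, and the last two terms
integrate to zero. The integrability hypotheses (with `2 |⟪a, b⟫| ≤ ‖a‖² + ‖b‖²` for the cross
term) make every term integrable, so the integral splits.
-/

open MeasureTheory

/-- Divergence of a vector field `F : ℝ^d → ℝ^d`: `div F x = Σ_a ∂_a F_a (x)`. -/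
noncomputable def diverg {d : ℕ}
    (F : EuclideanSpace ℝ (Fin d) → EuclideanSpace ℝ (Fin d))
    (x : EuclideanSpace ℝ (Fin d)) : ℝ :=
  ∑ a, fderiv ℝ (fun y => F y a) x (EuclideanSpace.single a 1)

/-- Laplacian of a scalar function `u : ℝ^d → ℝ`: `Δu x = Σ_a ∂_a ∂_a u (x)`. -/
noncomputable def lap {d : ℕ} (u : EuclideanSpace ℝ (Fin d) → ℝ)
    (x : EuclideanSpace ℝ (Fin d)) : ℝ :=
  ∑ a, fderiv ℝ (fun y => fderiv ℝ u y (EuclideanSpace.single a 1)) x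
    (EuclideanSpace.single a 1)

section InnerProductSpace

variable {F : Type*} [NormedAddCommGroup F] [InnerProductSpace ℝ F] [CompleteSpace F]

theorem smul_gradient_log {f : F → ℝ} {x : F} (hf : DifferentiableAt ℝ f x) (hx : f x ≠ 0) :
    f x • gradient (fun y => Real.log (f y)) x = gradient f x := by
  rw [gradient, gradient, (hf.hasFDerivAt.log hx).fderiv, LinearIsometryEquiv.map_smul, smul_smul,
    mul_inv_cancel₀ hx, one_smul]

theorem measurable_gradient [MeasurableSpace F] [BorelSpace F] (f : F → ℝ) :
    Measurable (gradient f) :=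
  (InnerProductSpace.toDual ℝ F).symm.continuous.measurable.comp (measurable_fderiv ℝ f)

end InnerProductSpace

section Integrability

variable {α F : Type*} [MeasurableSpace α] {μ : Measure α}
  [NormedAddCommGroup F] [InnerProductSpace ℝ F]

theorem MeasureTheory.Integrable.mul_of_mul_abs {q g : α → ℝ} (hq : 0 ≤ q)
    (hqg : AEStronglyMeasurable (fun z => q z * g z) μ)
    (h : Integrable (fun z => q z * |g z|) μ) : Integrable (fun z => q z * g z) μ :=
  h.mono' hqg (ae_of_all _ fun z => by rw [Real.norm_eq_abs, abs_mul, abs_of_nonneg (hq z)])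

theorem MeasureTheory.Integrable.mul_inner_of_mul_norm_sq {q : α → ℝ} {a b : α → F} (hq : 0 ≤ q)
    (hm : AEStronglyMeasurable (fun z => q z * inner ℝ (a z) (b z)) μ)
    (ha : Integrable (fun z => q z * ‖a z‖ ^ 2) μ) (hb : Integrable (fun z => q z * ‖b z‖ ^ 2) μ) :
    Integrable (fun z => q z * inner ℝ (a z) (b z)) μ := by
  refine ((ha.add hb).div_const 2).mono' hm (ae_of_all _ fun z => ?_)
  have hcs : |inner ℝ (a z) (b z)| ≤ ‖a z‖ * ‖b z‖ := abs_real_inner_le_norm _ _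
  rw [Real.norm_eq_abs, abs_mul, abs_of_nonneg (hq z), Pi.add_apply]
  nlinarith [mul_le_mul_of_nonneg_left hcs (hq z),
    mul_nonneg (hq z) (sq_nonneg (‖a z‖ - ‖b z‖))]

end Integrability

namespace EuclideanSpace

variable {d : ℕ}

theorem gradient_apply (f : EuclideanSpace ℝ (Fin d) → ℝ) (x : EuclideanSpace ℝ (Fin d))
    (a : Fin d) : gradient f x a = fderiv ℝ f x (single a 1) := by
  rw [← inner_gradient_left, real_inner_comm, inner_single_left]
  simp

end EuclideanSpace

section Euclidean

variable {d : ℕ}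

theorem lap_eq_diverg_gradient (u : EuclideanSpace ℝ (Fin d) → ℝ) :
    lap u = diverg (gradient u) := by
  ext x
  simp only [lap, diverg, EuclideanSpace.gradient_apply]

theorem measurable_lap (u : EuclideanSpace ℝ (Fin d) → ℝ) : Measurable (lap u) :=
  Finset.measurable_sum _ fun _ _ => measurable_fderiv_apply_const ℝ _ _

theorem diverg_smul_gradient {q u : EuclideanSpace ℝ (Fin d) → ℝ} {z : EuclideanSpace ℝ (Fin d)}
    (hq : DifferentiableAt ℝ q z) (hu : DifferentiableAt ℝ (fderiv ℝ u) z) :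
    diverg (fun y => q y • gradient u y) z
      = inner ℝ (gradient q z) (gradient u z) + q z * lap u z := by
  have hterm (a : Fin d) :
      fderiv ℝ (fun y => (q y • gradient u y) a) z (EuclideanSpace.single a 1)
        = gradient u z a * fderiv ℝ q z (EuclideanSpace.single a 1)
          + q z * fderiv ℝ (fun y => fderiv ℝ u y (EuclideanSpace.single a 1)) z
              (EuclideanSpace.single a 1) := by
    simp only [PiLp.smul_apply, smul_eq_mul, EuclideanSpace.gradient_apply]
    rw [fderiv_fun_mul hq (hu.clm_apply (differentiableAt_const _))]
    simp only [add_apply, smul_apply, smul_eq_mul]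
    ring
  simp only [diverg, lap, hterm, Finset.sum_add_distrib, ← Finset.mul_sum, PiLp.inner_apply,
    EuclideanSpace.gradient_apply q, RCLike.inner_apply, conj_trivial]

theorem diverg_smul_gradient_eq_mul_inner_gradient_log {q u : EuclideanSpace ℝ (Fin d) → ℝ}
    {z : EuclideanSpace ℝ (Fin d)} (hq : DifferentiableAt ℝ q z) (hqz : q z ≠ 0)
    (hu : DifferentiableAt ℝ (fderiv ℝ u) z) :
    diverg (fun y => q y • gradient u y) z
      = q z * inner ℝ (gradient (fun w => Real.log (q w)) z) (gradient u z) + q z * lap u z := by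
  rw [diverg_smul_gradient hq hu, ← smul_gradient_log hq hqz, real_inner_smul_left]

theorem lap_eq_mul_norm_gradient_log_sq_add {q : EuclideanSpace ℝ (Fin d) → ℝ}
    (hq : ContDiff ℝ 2 q) (hq0 : ∀ z, q z ≠ 0) (z : EuclideanSpace ℝ (Fin d)) :
    lap q z = q z * ‖gradient (fun w => Real.log (q w)) z‖ ^ 2
      + q z * lap (fun w => Real.log (q w)) z := by
  have hgrad : gradient q = fun y => q y • gradient (fun w => Real.log (q w)) y :=
    funext fun y => (smul_gradient_log (hq.differentiable two_ne_zero y) (hq0 y)).symm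
  rw [lap_eq_diverg_gradient, hgrad, diverg_smul_gradient_eq_mul_inner_gradient_log
    (hq.differentiable two_ne_zero z) (hq0 z)
    (((hq.log hq0).fderiv_right (m := 1) le_rfl).differentiable one_ne_zero z),
    real_inner_self_eq_norm_sq]

theorem mul_norm_gradient_sub_gradient_log_sq {q u : EuclideanSpace ℝ (Fin d) → ℝ}
    (hq : ContDiff ℝ 2 q) (hq0 : ∀ z, q z ≠ 0) (hu : ContDiff ℝ 2 u)
    (z : EuclideanSpace ℝ (Fin d)) :
    q z * ‖gradient u z - gradient (fun w => Real.log (q w)) z‖ ^ 2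
      = q z * (2 * lap u z - lap (fun w => Real.log (q w)) z + ‖gradient u z‖ ^ 2)
        + lap q z - 2 * diverg (fun y => q y • gradient u y) z := by
  rw [lap_eq_mul_norm_gradient_log_sq_add hq hq0, diverg_smul_gradient_eq_mul_inner_gradient_log
    (hq.differentiable two_ne_zero z) (hq0 z)
    ((hu.fderiv_right (m := 1) le_rfl).differentiable one_ne_zero z),
    norm_sub_sq_real, real_inner_comm]
  ring

end Euclidean

theorem score_matching_identity_general
    {d : ℕ} (p q : EuclideanSpace ℝ (Fin d) → ℝ)
    (hp : ContDiff ℝ 2 p) (hq : ContDiff ℝ 2 q)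
    (hppos : ∀ z, 0 < p z) (hqpos : ∀ z, 0 < q z)
    (hint1 : Integrable (fun z =>
      q z * ‖gradient (fun w => Real.log (p w)) z‖ ^ 2))
    (hint2 : Integrable (fun z =>
      q z * ‖gradient (fun w => Real.log (q w)) z‖ ^ 2))
    (hint3 : Integrable (fun z => q z * |lap (fun w => Real.log (p w)) z|))
    (hint4 : Integrable (fun z => q z * |lap (fun w => Real.log (q w)) z|))
    (hdiv : (∫ z, diverg (fun y => q y • gradient (fun w => Real.log (p w)) y) z) = 0)
    (hlapq : (∫ z, lap q z) = 0) :
    (∫ z, q z * ‖gradient (fun w => Real.log (p w)) z -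
        gradient (fun w => Real.log (q w)) z‖ ^ 2) =
      ∫ z, q z * (2 * lap (fun w => Real.log (p w)) z -
        lap (fun w => Real.log (q w)) z +
        ‖gradient (fun w => Real.log (p w)) z‖ ^ 2) := by
  set P := fun w => Real.log (p w)
  set Q := fun w => Real.log (q w)
  have hP : ContDiff ℝ 2 P := hp.log fun z => (hppos z).ne'
  have hq0 : ∀ z, q z ≠ 0 := fun z => (hqpos z).ne'
  have hqnn : 0 ≤ q := fun z => (hqpos z).le
  have hqm : Measurable q := hq.continuous.measurable
  have hlapP := hint3.mul_of_mul_abs hqnn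
    (hqm.mul (measurable_lap P)).aestronglyMeasurable
  have hlapQ := hint4.mul_of_mul_abs hqnn
    (hqm.mul (measurable_lap Q)).aestronglyMeasurable
  have hinner := hint2.mul_inner_of_mul_norm_sq hqnn
    (hqm.mul ((measurable_gradient Q).inner (measurable_gradient P))).aestronglyMeasurable hint1
  have hrhs : Integrable (fun z => q z * (2 * lap P z - lap Q z + ‖gradient P z‖ ^ 2)) :=
    (((hlapP.const_mul 2).sub' hlapQ).fun_add hint1).congr (ae_of_all _ fun z => by ring)
  have hlap : Integrable (lap q) := (hint2.fun_add hlapQ).congr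
    (ae_of_all _ fun z => (lap_eq_mul_norm_gradient_log_sq_add hq hq0 z).symm)
  have hdiverg : Integrable (diverg (fun y => q y • gradient P y)) :=
    (hinner.fun_add hlapP).congr (ae_of_all _ fun z =>
      (diverg_smul_gradient_eq_mul_inner_gradient_log (hq.differentiable two_ne_zero z) (hq0 z)
        ((hP.fderiv_right (m := 1) le_rfl).differentiable one_ne_zero z)).symm)
  calc _ = ∫ z, q z * (2 * lap P z - lap Q z + ‖gradient P z‖ ^ 2)
        + lap q z - 2 * diverg (fun y => q y • gradient P y) z :=
        integral_congr_ae (ae_of_all _ (mul_norm_gradient_sub_gradient_log_sq hq hq0 hP))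
    _ = _ := by
      rw [integral_sub (hrhs.fun_add hlap) (hdiverg.const_mul 2), integral_add hrhs hlap,
        integral_const_mul, hdiv, hlapq]
      ring

/-- Score-matching reformulation of the Fisher divergence:
`∫ q ‖∇log p − ∇log q‖² = ∫ q (2 Δlog p − Δlog q + ‖∇log p‖²)`, under integrability
assumptions and vanishing of the boundary integrals `∫ div(q ∇log p)` and `∫ Δq`. -/
theorem score_matching_identity
    {d : ℕ} (p q : EuclideanSpace ℝ (Fin d) → ℝ)
    (hp : ContDiff ℝ 2 p) (hq : ContDiff ℝ 2 q)
    (hppos : ∀ z, 0 < p z) (hqpos : ∀ z, 0 < q z)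
    (hqdens : (∫ z, q z) = 1)
    (hint1 : Integrable (fun z =>
      q z * ‖gradient (fun w => Real.log (p w)) z‖ ^ 2))
    (hint2 : Integrable (fun z =>
      q z * ‖gradient (fun w => Real.log (q w)) z‖ ^ 2))
    (hint3 : Integrable (fun z => q z * |lap (fun w => Real.log (p w)) z|))
    (hint4 : Integrable (fun z => q z * |lap (fun w => Real.log (q w)) z|))
    (hdiv : (∫ z, diverg (fun y => q y • gradient (fun w => Real.log (p w)) y) z) = 0)
    (hlapq : (∫ z, lap q z) = 0) :
    (∫ z, q z * ‖gradient (fun w => Real.log (p w)) z -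
        gradient (fun w => Real.log (q w)) z‖ ^ 2) =
      ∫ z, q z * (2 * lap (fun w => Real.log (p w)) z -
        lap (fun w => Real.log (q w)) z +
        ‖gradient (fun w => Real.log (p w)) z‖ ^ 2) :=
  score_matching_identity_general p q hp hq hppos hqpos hint1 hint2 hint3 hint4 hdiv hlapq
end

section
/- Let f, f' : ℝ^d → ℝ^d be C¹ diffeomorphisms, p, p' : ℝ^d → [0,∞) Lebesgue integrable, g, g' : ℝ^d → ℝ bounded measurable, and p_μ : ℝ^d → [0,∞) an integrable probability density whose Fourier transform is nonzero almost everywhere. Suppose that for almost every x ∈ ℝ^d: ∫ p(z)·p_μ(x − f(z)) dz = ∫ p'(z)·p_μ(x − f'(z)) dz and ∫ g(z)·p(z)·p_μ(x − f(z)) dz = ∫ g'(z)·p'(z)·p_μ(x − f'(z)) dz. Then, writing q := (p∘f⁻¹)·|det Df⁻¹| and q' := (p'∘f'⁻¹)·|det Df'⁻¹|, we have q = q' almost everywhere and (g∘f⁻¹)·q = (g'∘f'⁻¹)·q' almost everywhere on ℝ^d. -/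
/-!
Changing variables `y = f z` turns the observed density `x ↦ ∫ p z * pμ (x - f z) dz` into the
convolution `q ⋆ pμ` of the pushforward density `q = (p ∘ f⁻¹) * |det D f⁻¹|` with the noise.
Taking Fourier transforms, `𝓕 q * 𝓕 pμ = 𝓕 q' * 𝓕 pμ`; since `𝓕 pμ ≠ 0` a.e. and `𝓕 q`, `𝓕 q'`
are continuous, `𝓕 q = 𝓕 q'`, and Fourier transforms determine `L¹` functions. The same argument
applied to `g * p` and `g' * p'` gives the second identity.
-/

open MeasureTheory FourierTransform ContinuousLinearMap
open scoped ContDiff Convolution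

theorem ofReal_convolution_mul {𝕜 G : Type*} [RCLike 𝕜] [MeasurableSpace G] [Sub G]
    (q k : G → ℝ) (μ : Measure G) (x : G) :
    (((q ⋆[mul ℝ ℝ, μ] k) x : ℝ) : 𝕜) =
      ((fun y => (q y : 𝕜)) ⋆[mul 𝕜 𝕜, μ] fun y => (k y : 𝕜)) x := by
  simp only [convolution_mul, ← RCLike.ofReal_mul]
  exact integral_ofReal.symm

section Fourier

variable {V F : Type*} [NormedAddCommGroup V] [InnerProductSpace ℝ V] [FiniteDimensional ℝ V]
  [MeasurableSpace V] [BorelSpace V] [NormedAddCommGroup F] [NormedSpace ℂ F] [CompleteSpace F]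

theorem MeasureTheory.Integrable.integral_smul_eq_integral_fourierInv_smul_fourier
    {u : V → F} (hu : Integrable u) (φ : SchwartzMap V ℂ) :
    ∫ x, φ x • u x = ∫ ξ, 𝓕⁻ φ ξ • 𝓕 u ξ := by
  have h := VectorFourier.integral_fourierIntegral_smul_eq_flip (L := innerₗ V)
    Real.continuous_fourierChar continuous_inner ((𝓕⁻ φ).integrable (μ := volume)) hu
  rw [flip_innerₗ] at h
  change ∫ ξ, 𝓕 (⇑(𝓕⁻ φ : SchwartzMap V ℂ)) ξ • u ξ = _ at h
  rwa [← SchwartzMap.fourier_coe, FourierTransform.fourier_fourierInv_eq] at h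

theorem MeasureTheory.Integrable.ae_eq_of_fourier_eq {u v : V → F} (hu : Integrable u)
    (hv : Integrable v) (h : 𝓕 u = 𝓕 v) : u =ᵐ[volume] v := by
  refine ae_eq_of_integral_contDiff_smul_eq hu.locallyIntegrable hv.locallyIntegrable
    fun g hg hgc => ?_
  have hgc' : HasCompactSupport (fun x => (g x : ℂ)) := hgc.comp_left Complex.ofReal_zero
  have hg' : ContDiff ℝ ∞ (fun x => (g x : ℂ)) := Complex.ofRealCLM.contDiff.comp hg
  have hG := hu.integral_smul_eq_integral_fourierInv_smul_fourier (hgc'.toSchwartzMap hg')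
  rw [h, ← hv.integral_smul_eq_integral_fourierInv_smul_fourier] at hG
  simpa [Complex.coe_smul] using hG

theorem MeasureTheory.Integrable.ae_eq_of_convolution_ae_eq {u v k : V → ℂ}
    (hu : Integrable u) (hv : Integrable v) (hk : Integrable k) (hk' : ∀ᵐ ξ, 𝓕 k ξ ≠ 0)
    (h : u ⋆[mul ℂ ℂ] k =ᵐ[volume] v ⋆[mul ℂ ℂ] k) : u =ᵐ[volume] v := by
  refine hu.ae_eq_of_fourier_eq hv ?_
  have hcont : ∀ {w : V → ℂ}, Integrable w → Continuous (𝓕 w) := fun hw =>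
    VectorFourier.fourierIntegral_continuous Real.continuous_fourierChar continuous_inner hw
  refine ((hcont hu).ae_eq_iff_eq volume (hcont hv)).mp ?_
  filter_upwards [hk'] with ξ hξ
  refine mul_right_cancel₀ hξ ?_
  rw [← Real.fourier_mul_convolution_eq hu hk, ← Real.fourier_mul_convolution_eq hv hk]
  exact Real.fourier_congr_ae h ξ

theorem MeasureTheory.Integrable.ae_eq_of_convolution_ae_eq_real {q q' k : V → ℝ}
    (hq : Integrable q) (hq' : Integrable q') (hk : Integrable k)
    (hk' : ∀ᵐ ξ, 𝓕 (fun x => (k x : ℂ)) ξ ≠ 0)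
    (h : q ⋆[mul ℝ ℝ] k =ᵐ[volume] q' ⋆[mul ℝ ℝ] k) : q =ᵐ[volume] q' := by
  have hc := (hq.ofReal (𝕜 := ℂ)).ae_eq_of_convolution_ae_eq hq'.ofReal hk.ofReal hk' <| by
    filter_upwards [h] with x hx
    simp only [← ofReal_convolution_mul, hx]
  filter_upwards [hc] with y hy
  exact_mod_cast hy

end Fourier

section ChangeOfVariables

variable {E F : Type*} [NormedAddCommGroup E] [NormedSpace ℝ E]

noncomputable def pushforwardDensity (finv : E → E) (p : E → ℝ) : E → ℝ :=
  fun y => p (finv y) * |(fderiv ℝ finv y).det|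

theorem pushforwardDensity_mul (finv : E → E) (g p : E → ℝ) :
    pushforwardDensity finv (fun z => g z * p z) =
      fun y => g (finv y) * pushforwardDensity finv p y := by
  ext y
  simp only [pushforwardDensity, mul_assoc]

variable [FiniteDimensional ℝ E] [MeasurableSpace E] [BorelSpace E]
  [NormedAddCommGroup F] [NormedSpace ℝ F] (μ : Measure E) [μ.IsAddHaarMeasure] {finv : E → E}

theorem integral_abs_det_fderiv_smul_comp (hd : Differentiable ℝ finv)
    (hbij : Function.Bijective finv) (φ : E → F) :
    ∫ y, |(fderiv ℝ finv y).det| • φ (finv y) ∂μ = ∫ z, φ z ∂μ := by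
  have h := integral_image_eq_integral_abs_det_fderiv_smul μ MeasurableSet.univ
    (fun y _ => (hd y).hasFDerivAt.hasFDerivWithinAt) hbij.injective.injOn φ
  rwa [Set.image_univ, hbij.surjective.range_eq, Measure.restrict_univ, eq_comm] at h

theorem integrable_abs_det_fderiv_smul_comp_iff (hd : Differentiable ℝ finv)
    (hbij : Function.Bijective finv) {φ : E → F} :
    Integrable (fun y => |(fderiv ℝ finv y).det| • φ (finv y)) μ ↔ Integrable φ μ := by
  have h := integrableOn_image_iff_integrableOn_abs_det_fderiv_smul μ MeasurableSet.univ
    (fun y _ => (hd y).hasFDerivAt.hasFDerivWithinAt) hbij.injective.injOn φ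
  rwa [Set.image_univ, hbij.surjective.range_eq, integrableOn_univ, integrableOn_univ,
    Iff.comm] at h

variable {μ}

theorem integrable_pushforwardDensity (hd : Differentiable ℝ finv)
    (hbij : Function.Bijective finv) {p : E → ℝ} (hp : Integrable p μ) :
    Integrable (pushforwardDensity finv p) μ := by
  unfold pushforwardDensity
  simpa only [smul_eq_mul, mul_comm] using
    (integrable_abs_det_fderiv_smul_comp_iff μ hd hbij).mpr hp

theorem pushforwardDensity_convolution_eq {f : E → E} (hd : Differentiable ℝ finv)
    (hfl : Function.LeftInverse finv f) (hfr : Function.RightInverse finv f) (p k : E → ℝ)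
    (x : E) : (pushforwardDensity finv p ⋆[mul ℝ ℝ, μ] k) x = ∫ z, p z * k (x - f z) ∂μ := by
  rw [← integral_abs_det_fderiv_smul_comp μ hd ⟨hfr.injective, hfl.surjective⟩]
  simp only [convolution_mul, pushforwardDensity, smul_eq_mul, hfr _]
  congr 1 with y
  ring

end ChangeOfVariables

section Deconvolution

variable {V : Type*} [NormedAddCommGroup V] [InnerProductSpace ℝ V] [FiniteDimensional ℝ V]
  [MeasurableSpace V] [BorelSpace V] {f finv f' f'inv : V → V}

theorem pushforwardDensity_ae_eq_of_observed_ae_eq (hfinv : Differentiable ℝ finv)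
    (hfl : Function.LeftInverse finv f) (hfr : Function.RightInverse finv f)
    (hf'inv : Differentiable ℝ f'inv)
    (hf'l : Function.LeftInverse f'inv f') (hf'r : Function.RightInverse f'inv f')
    {k : V → ℝ} (hk : Integrable k) (hk' : ∀ᵐ ξ, 𝓕 (fun x => (k x : ℂ)) ξ ≠ 0)
    {ρ ρ' : V → ℝ} (hρ : Integrable ρ) (hρ' : Integrable ρ')
    (hobs : ∀ᵐ x, ∫ z, ρ z * k (x - f z) = ∫ z, ρ' z * k (x - f' z)) :
    pushforwardDensity finv ρ =ᵐ[volume] pushforwardDensity f'inv ρ' := by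
  refine (integrable_pushforwardDensity hfinv ⟨hfr.injective, hfl.surjective⟩ hρ)
    |>.ae_eq_of_convolution_ae_eq_real
      (integrable_pushforwardDensity hf'inv ⟨hf'r.injective, hf'l.surjective⟩ hρ') hk hk' ?_
  filter_upwards [hobs] with x hx
  rwa [pushforwardDensity_convolution_eq hfinv hfl hfr,
    pushforwardDensity_convolution_eq hf'inv hf'l hf'r]

end Deconvolution

theorem pushforward_densities_ae_eq_of_observed_eq_general
    {d : ℕ}
    (f finv f' f'inv : EuclideanSpace ℝ (Fin d) → EuclideanSpace ℝ (Fin d))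
    (hfinv : ContDiff ℝ 1 finv)
    (hfl : Function.LeftInverse finv f) (hfr : Function.RightInverse finv f)
    (hf'inv : ContDiff ℝ 1 f'inv)
    (hf'l : Function.LeftInverse f'inv f') (hf'r : Function.RightInverse f'inv f')
    (p p' : EuclideanSpace ℝ (Fin d) → ℝ)
    (hpint : Integrable p)
    (hp'int : Integrable p')
    (g g' : EuclideanSpace ℝ (Fin d) → ℝ)
    (hg : Measurable g) (hg' : Measurable g')
    (hgb : ∃ C, ∀ z, |g z| ≤ C) (hg'b : ∃ C, ∀ z, |g' z| ≤ C)
    (pμ : EuclideanSpace ℝ (Fin d) → ℝ)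
    (hpμint : Integrable pμ)
    (hft : ∀ᵐ ξ : EuclideanSpace ℝ (Fin d) ∂volume,
      𝓕 (fun x => (pμ x : ℂ)) ξ ≠ 0)
    (hobs1 : ∀ᵐ x : EuclideanSpace ℝ (Fin d) ∂volume,
      (∫ z, p z * pμ (x - f z)) = ∫ z, p' z * pμ (x - f' z))
    (hobs2 : ∀ᵐ x : EuclideanSpace ℝ (Fin d) ∂volume,
      (∫ z, g z * p z * pμ (x - f z)) = ∫ z, g' z * p' z * pμ (x - f' z)) :
    ((fun x => p (finv x) * |(fderiv ℝ finv x).det|) =ᵐ[volume]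
      fun x => p' (f'inv x) * |(fderiv ℝ f'inv x).det|) ∧
    ((fun x => g (finv x) * (p (finv x) * |(fderiv ℝ finv x).det|)) =ᵐ[volume]
      fun x => g' (f'inv x) * (p' (f'inv x) * |(fderiv ℝ f'inv x).det|)) := by
  obtain ⟨C, hC⟩ := hgb
  obtain ⟨C', hC'⟩ := hg'b
  have hgp : Integrable fun z => g z * p z :=
    hpint.bdd_mul hg.aestronglyMeasurable (.of_forall hC)
  have hgp' : Integrable fun z => g' z * p' z :=
    hp'int.bdd_mul hg'.aestronglyMeasurable (.of_forall hC')
  have hd := hfinv.differentiable one_ne_zero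
  have hd' := hf'inv.differentiable one_ne_zero
  refine ⟨pushforwardDensity_ae_eq_of_observed_ae_eq hd hfl hfr hd' hf'l hf'r hpμint hft
    hpint hp'int hobs1, ?_⟩
  have hgq := pushforwardDensity_ae_eq_of_observed_ae_eq hd hfl hfr hd' hf'l hf'r hpμint hft
    hgp hgp' hobs2
  rwa [pushforwardDensity_mul, pushforwardDensity_mul] at hgq

/-- If a noise density `p_μ` has a.e. nonzero Fourier transform and two additive-noise
generative models induce the same observed densities (for the input and for the
`g`-weighted input), then their pushforward densities and `g`-weighted pushforward
densities coincide almost everywhere. -/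
theorem pushforward_densities_ae_eq_of_observed_eq
    {d : ℕ}
    (f finv f' f'inv : EuclideanSpace ℝ (Fin d) → EuclideanSpace ℝ (Fin d))
    (hf : ContDiff ℝ 1 f) (hfinv : ContDiff ℝ 1 finv)
    (hfl : Function.LeftInverse finv f) (hfr : Function.RightInverse finv f)
    (hf' : ContDiff ℝ 1 f') (hf'inv : ContDiff ℝ 1 f'inv)
    (hf'l : Function.LeftInverse f'inv f') (hf'r : Function.RightInverse f'inv f')
    (p p' : EuclideanSpace ℝ (Fin d) → ℝ)
    (hpint : Integrable p) (hp0 : ∀ z, 0 ≤ p z)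
    (hp'int : Integrable p') (hp'0 : ∀ z, 0 ≤ p' z)
    (g g' : EuclideanSpace ℝ (Fin d) → ℝ)
    (hg : Measurable g) (hg' : Measurable g')
    (hgb : ∃ C, ∀ z, |g z| ≤ C) (hg'b : ∃ C, ∀ z, |g' z| ≤ C)
    (pμ : EuclideanSpace ℝ (Fin d) → ℝ)
    (hpμint : Integrable pμ) (hpμ0 : ∀ w, 0 ≤ pμ w) (hpμ1 : (∫ w, pμ w) = 1)
    (hft : ∀ᵐ ξ : EuclideanSpace ℝ (Fin d) ∂volume,
      𝓕 (fun x => (pμ x : ℂ)) ξ ≠ 0)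
    (hobs1 : ∀ᵐ x : EuclideanSpace ℝ (Fin d) ∂volume,
      (∫ z, p z * pμ (x - f z)) = ∫ z, p' z * pμ (x - f' z))
    (hobs2 : ∀ᵐ x : EuclideanSpace ℝ (Fin d) ∂volume,
      (∫ z, g z * p z * pμ (x - f z)) = ∫ z, g' z * p' z * pμ (x - f' z)) :
    ((fun x => p (finv x) * |(fderiv ℝ finv x).det|) =ᵐ[volume]
      fun x => p' (f'inv x) * |(fderiv ℝ f'inv x).det|) ∧
    ((fun x => g (finv x) * (p (finv x) * |(fderiv ℝ finv x).det|)) =ᵐ[volume]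
      fun x => g' (f'inv x) * (p' (f'inv x) * |(fderiv ℝ f'inv x).det|)) :=
  pushforward_densities_ae_eq_of_observed_eq_general f finv f' f'inv hfinv hfl hfr hf'inv hf'l hf'r
    p p' hpint hp'int g g' hg hg' hgb hg'b pμ hpμint hft hobs1 hobs2
end

section
/- Let d = m + n and write z = (s,v) ∈ ℝ^m × ℝ^n. Let f, f' : ℝ^d → ℝ^d be C¹ diffeomorphisms; let g, g' : ℝ^m → ℝ^k be bounded continuous functions such that g applied to the first m coordinates of f⁻¹(x) equals g' applied to the first m coordinates of f'⁻¹(x), for every x ∈ ℝ^d (semantic identification on the training domain); let p_μ : ℝ^d → [0,∞) be an integrable probability density whose Fourier transform is nonzero almost everywhere; and let p̃, p̃' : ℝ^d → [0,∞) be continuous integrable densities (the test-domain priors). If ∫ p̃(z)·p_μ(x − f(z)) dz = ∫ p̃'(z)·p_μ(x − f'(z)) dz for every x ∈ ℝ^d, then: (a) p̃(f⁻¹(x))·|det Df⁻¹(x)| = p̃'(f'⁻¹(x))·|det Df'⁻¹(x)| for every x ∈ ℝ^d (so p̃' is the pushforward of p̃ under Φ := f'⁻¹ ∘ f); and (b)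 ∫ g(s)·p̃(s,v)·p_μ(x − f(s,v)) ds dv = ∫ g'(s)·p̃'(s,v)·p_μ(x − f'(s,v)) ds dv for every x ∈ ℝ^d; consequently the two models' predictors Ẽ[y|x] (the ratios of the integrals in (b) to the common marginal density) coincide at every x where the marginal density is positive. (This is the paper's domain-adaptation theorem: fitting the test-domain input distribution with shared causal mechanisms recovers the test-domain prior and yields the exact test-domain predictor.) -/
/-!
Changing variables by the inverse mixing function turns the fitted marginal
`x ↦ ∫ p̃(z) p_μ(x - f z) dz` into the convolution of `p_μ` with the pushforward prior
`q = p̃ ∘ f⁻¹ · |det Df⁻¹|`. The Fourier transform turns convolution into multiplication, and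
`𝓕 p_μ ≠ 0` almost everywhere, so the (continuous) transforms of `q - q'` vanish identically;
Fourier inversion then gives `q = q'`. The same change of variables rewrites both weighted
integrals as integrals against `q = q'`, where the shared mechanism `g ∘ (f⁻¹)₁ = g' ∘ (f'⁻¹)₁`
makes the integrands agree.
-/

open MeasureTheory

/-- Fourier transform of a real function on `ℝ^m × ℝ^n` (with the inner product given by
the sum of the coordinate inner products). -/
noncomputable def fourierProd {m n : ℕ}
    (f : EuclideanSpace ℝ (Fin m) × EuclideanSpace ℝ (Fin n) → ℝ)
    (ξ : EuclideanSpace ℝ (Fin m) × EuclideanSpace ℝ (Fin n)) : ℂ :=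
  ∫ x, Complex.exp (-(2 * Real.pi * Complex.I *
      (((inner ℝ x.1 ξ.1 : ℝ) + (inner ℝ x.2 ξ.2 : ℝ) : ℝ) : ℂ))) * (f x : ℂ)

open FourierTransform ContinuousLinearMap Convolution WithLp Function

section Deconvolution

variable {E : Type*} [NormedAddCommGroup E] [InnerProductSpace ℝ E] [FiniteDimensional ℝ E]
  [MeasurableSpace E] [BorelSpace E]

theorem eq_zero_of_convolution_ae_eq_zero {h p : E → ℂ} (hc : Continuous h) (hh : Integrable h)
    (hp : Integrable p) (hft : ∀ᵐ ξ, 𝓕 p ξ ≠ 0) (hconv : h ⋆[mul ℂ ℂ] p =ᵐ[volume] 0) :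
    h = 0 := by
  have hFh : 𝓕 h = 0 := by
    have hcont : Continuous (𝓕 h) :=
      VectorFourier.fourierIntegral_continuous Real.continuous_fourierChar continuous_inner hh
    refine (hcont.ae_eq_iff_eq volume continuous_const).1 ?_
    filter_upwards [hft] with ξ hξ
    have : 𝓕 h ξ * 𝓕 p ξ = 0 := by
      rw [← Real.fourier_mul_convolution_eq hh hp, Real.fourier_congr_ae hconv]
      simp [Real.fourier_eq]
    exact (mul_eq_zero.1 this).resolve_right hξ
  rw [← hc.fourierInv_fourier_eq hh (by rw [hFh]; exact integrable_zero _ _ _), hFh]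
  ext v
  simp [Real.fourierInv_eq]

theorem eq_of_integral_mul_sub_ae_eq {h₁ h₂ p : E → ℝ} (hc₁ : Continuous h₁)
    (hc₂ : Continuous h₂) (hi₁ : Integrable h₁) (hi₂ : Integrable h₂) (hp : Integrable p)
    (hft : ∀ᵐ ξ, 𝓕 (fun x ↦ (p x : ℂ)) ξ ≠ 0)
    (hconv : ∀ᵐ x, ∫ t, h₁ t * p (x - t) = ∫ t, h₂ t * p (x - t)) : h₁ = h₂ := by
  have hzero := eq_zero_of_convolution_ae_eq_zero (h := fun x ↦ ((h₁ x - h₂ x : ℝ) : ℂ))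
    (Complex.continuous_ofReal.comp (hc₁.sub hc₂)) (hi₁.sub hi₂).ofReal hp.ofReal hft ?_
  · funext x
    simpa [sub_eq_zero] using congrFun hzero x
  filter_upwards [hconv, hi₁.ae_convolution_exists (L := mul ℝ ℝ) hp,
    hi₂.ae_convolution_exists (L := mul ℝ ℝ) hp] with x hx h₁x h₂x
  have hi₁x : Integrable fun t ↦ h₁ t * p (x - t) := h₁x.integrable
  have hi₂x : Integrable fun t ↦ h₂ t * p (x - t) := h₂x.integrable
  have : ∫ t, (h₁ t - h₂ t) * p (x - t) = 0 := by
    simp_rw [sub_mul]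
    rw [integral_sub hi₁x hi₂x, hx, sub_self]
  rw [convolution_mul, Pi.zero_apply, ← Complex.ofReal_zero, ← this, ← integral_complex_ofReal]
  push_cast
  rfl

end Deconvolution

section Product

variable {U V : Type*} [NormedAddCommGroup U] [InnerProductSpace ℝ U] [FiniteDimensional ℝ U]
  [MeasurableSpace U] [BorelSpace U] [NormedAddCommGroup V] [InnerProductSpace ℝ V]
  [FiniteDimensional ℝ V] [MeasurableSpace V] [BorelSpace V]

-- Needed to see through the defeq `volume = volume.prod volume`.
instance : (volume : Measure (U × V)).IsAddHaarMeasure :=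
  Measure.prod.instIsAddHaarMeasure _ _

theorem integral_comp_ofLp_prod {F : Type*} [NormedAddCommGroup F] [NormedSpace ℝ F]
    (G : U × V → F) : ∫ w : WithLp 2 (U × V), G (ofLp w) = ∫ z, G z :=
  (volume_preserving_symm_measurableEquiv_toLp_prod U V).integral_comp' G

-- `U × V` carries the sup norm, so its Fourier theory is borrowed from `WithLp 2 (U × V)`.
theorem eq_of_integral_mul_sub_ae_eq_prod {h₁ h₂ p : U × V → ℝ} (hc₁ : Continuous h₁)
    (hc₂ : Continuous h₂) (hi₁ : Integrable h₁) (hi₂ : Integrable h₂) (hp : Integrable p)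
    (hft : ∀ᵐ ξ, 𝓕 (fun w : WithLp 2 (U × V) ↦ (p (ofLp w) : ℂ)) (toLp 2 ξ) ≠ 0)
    (hconv : ∀ᵐ x, ∫ t, h₁ t * p (x - t) = ∫ t, h₂ t * p (x - t)) : h₁ = h₂ := by
  have hmp := volume_preserving_ofLp U V
  have hcont := prod_continuous_ofLp 2 U V
  have heq := eq_of_integral_mul_sub_ae_eq (hc₁.comp hcont) (hc₂.comp hcont)
    (hmp.integrable_comp_of_integrable hi₁) (hmp.integrable_comp_of_integrable hi₂)
    (hmp.integrable_comp_of_integrable hp) (by simpa using hmp.quasiMeasurePreserving.ae hft)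
    (by
      filter_upwards [hmp.quasiMeasurePreserving.ae hconv] with x hx
      simp only [comp_apply, ofLp_sub]
      rwa [integral_comp_ofLp_prod (fun t ↦ h₁ t * p (ofLp x - t)),
        integral_comp_ofLp_prod (fun t ↦ h₂ t * p (ofLp x - t))])
  funext z
  simpa using congrFun heq (toLp 2 z)

end Product

theorem fourierProd_eq_fourier_toLp {m n : ℕ}
    (p : EuclideanSpace ℝ (Fin m) × EuclideanSpace ℝ (Fin n) → ℝ)
    (ξ : EuclideanSpace ℝ (Fin m) × EuclideanSpace ℝ (Fin n)) :
    fourierProd p ξ = 𝓕 (fun w : WithLp 2 (_ × _) ↦ (p (ofLp w) : ℂ)) (toLp 2 ξ) := by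
  rw [Real.fourier_eq', fourierProd, ← integral_comp_ofLp_prod]
  congr 1 with w
  simp only [prod_inner_apply, smul_eq_mul]
  push_cast
  ring_nf

section ChangeOfVariables

variable {E F : Type*} [NormedAddCommGroup E] [NormedSpace ℝ E] [NormedAddCommGroup F]
  [NormedSpace ℝ F] {e : E → E} {p : E → ℝ}

-- For a diffeomorphism `e`, this is the pushforward of the density `p` under `e⁻¹`.
noncomputable def pullbackDensity (e : E → E) (p : E → ℝ) (x : E) : ℝ :=
  p (e x) * |(fderiv ℝ e x).det|

theorem Continuous.pullbackDensity (hp : Continuous p) (he : ContDiff ℝ 1 e) :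
    Continuous (pullbackDensity e p) :=
  (hp.comp he.continuous).mul
    (ContinuousLinearMap.continuous_det.comp (he.continuous_fderiv one_ne_zero)).abs

variable [FiniteDimensional ℝ E] [MeasurableSpace E] [BorelSpace E] {μ : Measure E}
  [μ.IsAddHaarMeasure]

theorem MeasureTheory.Integrable.pullbackDensity (hp : Integrable p μ) (he : Differentiable ℝ e)
    (hbij : Bijective e) : Integrable (pullbackDensity e p) μ := by
  have h := integrableOn_image_iff_integrableOn_abs_det_fderiv_smul μ MeasurableSet.univ
    (fun x _ ↦ (he x).hasFDerivAt.hasFDerivWithinAt) hbij.injective.injOn p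
  rw [Set.image_univ, hbij.surjective.range_eq, integrableOn_univ, integrableOn_univ] at h
  exact (h.1 hp).congr (.of_forall fun x ↦ mul_comm _ _)

theorem integral_smul_eq_integral_pullbackDensity_smul (he : Differentiable ℝ e)
    (hbij : Bijective e) (p : E → ℝ) (K : E → F) :
    ∫ z, p z • K z ∂μ = ∫ x, pullbackDensity e p x • K (e x) ∂μ := by
  have h := integral_image_eq_integral_abs_det_fderiv_smul μ MeasurableSet.univ
    (fun x _ ↦ (he x).hasFDerivAt.hasFDerivWithinAt) hbij.injective.injOn (fun z ↦ p z • K z)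
  rw [Set.image_univ, hbij.surjective.range_eq] at h
  simpa [pullbackDensity, smul_smul, mul_comm] using h

theorem integral_mul_sub_comp_eq_integral_pullbackDensity_mul {f : E → E}
    (he : Differentiable ℝ e) (hbij : Bijective e) (hr : RightInverse e f) (p q : E → ℝ)
    (x : E) : ∫ z, p z * q (x - f z) ∂μ = ∫ u, pullbackDensity e p u * q (x - u) ∂μ := by
  simpa only [smul_eq_mul, hr _] using
    integral_smul_eq_integral_pullbackDensity_smul (μ := μ) he hbij p (fun z ↦ q (x - f z))

end ChangeOfVariables

theorem domain_adaptation_general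
    {m n k : ℕ}
    (f finv f' f'inv :
      EuclideanSpace ℝ (Fin m) × EuclideanSpace ℝ (Fin n) →
        EuclideanSpace ℝ (Fin m) × EuclideanSpace ℝ (Fin n))
    (hfinv : ContDiff ℝ 1 finv)
    (hfl : Function.LeftInverse finv f) (hfr : Function.RightInverse finv f)
    (hf'inv : ContDiff ℝ 1 f'inv)
    (hf'l : Function.LeftInverse f'inv f') (hf'r : Function.RightInverse f'inv f')
    (g g' : EuclideanSpace ℝ (Fin m) → EuclideanSpace ℝ (Fin k))
    (hsem : ∀ x : EuclideanSpace ℝ (Fin m) × EuclideanSpace ℝ (Fin n),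
      g (finv x).1 = g' (f'inv x).1)
    (pμ : EuclideanSpace ℝ (Fin m) × EuclideanSpace ℝ (Fin n) → ℝ)
    (hpμint : Integrable pμ)
    (hft : ∀ᵐ ξ : EuclideanSpace ℝ (Fin m) × EuclideanSpace ℝ (Fin n) ∂volume,
      fourierProd pμ ξ ≠ 0)
    (pt pt' : EuclideanSpace ℝ (Fin m) × EuclideanSpace ℝ (Fin n) → ℝ)
    (hptc : Continuous pt) (hptint : Integrable pt)
    (hpt'c : Continuous pt') (hpt'int : Integrable pt')
    (hfit : ∀ x, (∫ z, pt z * pμ (x - f z)) = ∫ z, pt' z * pμ (x - f' z)) :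
    (∀ x, pt (finv x) * |(fderiv ℝ finv x).det| =
      pt' (f'inv x) * |(fderiv ℝ f'inv x).det|) ∧
    (∀ x, (∫ z, (pt z * pμ (x - f z)) • g z.1) =
      ∫ z, (pt' z * pμ (x - f' z)) • g' z.1) ∧
    (∀ x, 0 < (∫ z, pt z * pμ (x - f z)) →
      (∫ z, pt z * pμ (x - f z))⁻¹ • (∫ z, (pt z * pμ (x - f z)) • g z.1) =
        (∫ z, pt' z * pμ (x - f' z))⁻¹ •
          (∫ z, (pt' z * pμ (x - f' z)) • g' z.1)) := by
  have hbij : Bijective finv := ⟨hfr.injective, hfl.surjective⟩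
  have hbij' : Bijective f'inv := ⟨hf'r.injective, hf'l.surjective⟩
  have hd := hfinv.differentiable one_ne_zero
  have hd' := hf'inv.differentiable one_ne_zero
  have hprior : pullbackDensity finv pt = pullbackDensity f'inv pt' :=
    eq_of_integral_mul_sub_ae_eq_prod (hptc.pullbackDensity hfinv) (hpt'c.pullbackDensity hf'inv)
      (hptint.pullbackDensity hd hbij) (hpt'int.pullbackDensity hd' hbij') hpμint
      (hft.mono fun ξ hξ ↦ by rwa [← fourierProd_eq_fourier_toLp])
      (.of_forall fun x ↦ by
        rw [← integral_mul_sub_comp_eq_integral_pullbackDensity_mul hd hbij hfr,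
          ← integral_mul_sub_comp_eq_integral_pullbackDensity_mul hd' hbij' hf'r, hfit])
  have hpred : ∀ x, ∫ z, (pt z * pμ (x - f z)) • g z.1 =
      ∫ z, (pt' z * pμ (x - f' z)) • g' z.1 := by
    intro x
    simp_rw [← smul_smul]
    rw [integral_smul_eq_integral_pullbackDensity_smul hd hbij pt,
      integral_smul_eq_integral_pullbackDensity_smul hd' hbij' pt', hprior]
    congr 1 with u
    rw [hfr u, hf'r u, hsem]
  exact ⟨congrFun hprior, hpred, fun x _ ↦ by rw [hfit x, hpred x]⟩

/-- Domain-adaptation theorem: with semantic-identified causal mechanisms shared across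
domains (`g ∘ (f⁻¹)^S = g' ∘ (f'⁻¹)^S`) and a noise density with a.e. nonzero characteristic
function, fitting the test-domain input distribution
(`∫ p̃(z) p_μ(x − f z) dz = ∫ p̃'(z) p_μ(x − f' z) dz` for all `x`) recovers the
test-domain prior ((a): `p̃'` is the pushforward of `p̃` under `f'⁻¹ ∘ f`) and yields the
exact test-domain predictor ((b) and (c)). -/
theorem domain_adaptation
    {m n k : ℕ}
    (f finv f' f'inv :
      EuclideanSpace ℝ (Fin m) × EuclideanSpace ℝ (Fin n) →
        EuclideanSpace ℝ (Fin m) × EuclideanSpace ℝ (Fin n))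
    (hf : ContDiff ℝ 1 f) (hfinv : ContDiff ℝ 1 finv)
    (hfl : Function.LeftInverse finv f) (hfr : Function.RightInverse finv f)
    (hf' : ContDiff ℝ 1 f') (hf'inv : ContDiff ℝ 1 f'inv)
    (hf'l : Function.LeftInverse f'inv f') (hf'r : Function.RightInverse f'inv f')
    (g g' : EuclideanSpace ℝ (Fin m) → EuclideanSpace ℝ (Fin k))
    (hgc : Continuous g) (hgb : ∃ C, ∀ s, ‖g s‖ ≤ C)
    (hg'c : Continuous g') (hg'b : ∃ C, ∀ s, ‖g' s‖ ≤ C)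
    (hsem : ∀ x : EuclideanSpace ℝ (Fin m) × EuclideanSpace ℝ (Fin n),
      g (finv x).1 = g' (f'inv x).1)
    (pμ : EuclideanSpace ℝ (Fin m) × EuclideanSpace ℝ (Fin n) → ℝ)
    (hpμint : Integrable pμ) (hpμ0 : ∀ w, 0 ≤ pμ w) (hpμ1 : (∫ w, pμ w) = 1)
    (hft : ∀ᵐ ξ : EuclideanSpace ℝ (Fin m) × EuclideanSpace ℝ (Fin n) ∂volume,
      fourierProd pμ ξ ≠ 0)
    (pt pt' : EuclideanSpace ℝ (Fin m) × EuclideanSpace ℝ (Fin n) → ℝ)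
    (hptc : Continuous pt) (hpt0 : ∀ z, 0 ≤ pt z) (hptint : Integrable pt)
    (hpt'c : Continuous pt') (hpt'0 : ∀ z, 0 ≤ pt' z) (hpt'int : Integrable pt')
    (hfit : ∀ x, (∫ z, pt z * pμ (x - f z)) = ∫ z, pt' z * pμ (x - f' z)) :
    (∀ x, pt (finv x) * |(fderiv ℝ finv x).det| =
      pt' (f'inv x) * |(fderiv ℝ f'inv x).det|) ∧
    (∀ x, (∫ z, (pt z * pμ (x - f z)) • g z.1) =
      ∫ z, (pt' z * pμ (x - f' z)) • g' z.1) ∧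
    (∀ x, 0 < (∫ z, pt z * pμ (x - f z)) →
      (∫ z, pt z * pμ (x - f z))⁻¹ • (∫ z, (pt z * pμ (x - f z)) • g z.1) =
        (∫ z, pt' z * pμ (x - f' z))⁻¹ •
          (∫ z, (pt' z * pμ (x - f' z)) • g' z.1)) :=
  domain_adaptation_general f finv f' f'inv hfinv hfl hfr hf'inv hf'l hf'r g g' hsem pμ hpμint hft
    pt pt' hptc hptint hpt'c hpt'int hfit
end

section
/- Let (S, d_S) and (Y, d_Y) be metric spaces, V a nonempty set, Φ : S × V → S × V a bijection with components Φ = (Φ^S, Φ^V), g, g' : S → Y maps, and δ ≥ 0. Assume d_S(s₁, s₂) ≤ (1/2)·d_Y(g(s₁), g(s₂)) for all s₁, s₂ ∈ S (i.e., g is injective and its inverse on its image is (1/2)-Lipschitz). If d_Y(g(s), g'(Φ^S(s,v))) ≤ δ for all (s,v) ∈ S × V, then, writing (Φ⁻¹)^S for the S-component of Φ⁻¹: (a) d_Y(g'(s'), g((Φ⁻¹)^S(s',v'))) ≤ δ for all (s',v') ∈ S × V; and (b) d_S((Φ⁻¹)^S(s',v₁'), (Φ⁻¹)^S(s',v₂'))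 ≤ δ for all s' ∈ S and all v₁', v₂' ∈ V. (This is the core of the paper's proof that δ-semantic-dependency is a symmetric relation.) -/
/-- Core of the symmetry of δ-semantic-dependency: if `Φ = (Φ^S, Φ^V)` is a bijection of
`S × V`, `g` is injective with `(1/2)`-Lipschitz inverse on its image, and
`d(g s, g' (Φ^S (s,v))) ≤ δ` for all `(s,v)`, then
(a) `d(g' s', g ((Φ⁻¹ (s',v'))^S)) ≤ δ`, and
(b) the `v'`-dependence of `(Φ⁻¹)^S` is at most `δ`. -/
theorem delta_semantic_dependency_symm
    {S Y V : Type*} [MetricSpace S] [MetricSpace Y] [Nonempty V]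
    (Φ : S × V ≃ S × V) (ΦS : S × V → S) (ΦV : S × V → V)
    (hΦ : ∀ p : S × V, Φ p = (ΦS p, ΦV p))
    (g g' : S → Y) (δ : ℝ) (hδ : 0 ≤ δ)
    (hinv : ∀ s₁ s₂ : S, dist s₁ s₂ ≤ (1 / 2) * dist (g s₁) (g s₂))
    (hconv : ∀ (s : S) (v : V), dist (g s) (g' (ΦS (s, v))) ≤ δ) :
    (∀ (s' : S) (v' : V), dist (g' s') (g (Φ.symm (s', v')).1) ≤ δ) ∧
    (∀ (s' : S) (v₁' v₂' : V),
      dist (Φ.symm (s', v₁')).1 (Φ.symm (s', v₂')).1 ≤ δ) := by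
  have key : ∀ (s' : S) (v' : V), dist (g' s') (g (Φ.symm (s', v')).1) ≤ δ := by
    intro s' v'
    have h1 : ΦS (Φ.symm (s', v')) = s' := by
      have := hΦ (Φ.symm (s', v'))
      rw [Φ.apply_symm_apply] at this
      exact (Prod.mk.injEq _ _ _ _ ▸ this).1.symm
    have := hconv (Φ.symm (s', v')).1 (Φ.symm (s', v')).2
    rw [Prod.mk.eta, h1] at this
    rw [dist_comm]; exact this
  refine ⟨key, fun s' v₁ v₂ => ?_⟩
  calc dist (Φ.symm (s', v₁)).1 (Φ.symm (s', v₂)).1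
      ≤ (1/2) * dist (g (Φ.symm (s', v₁)).1) (g (Φ.symm (s', v₂)).1) := hinv _ _
    _ ≤ (1/2) * (dist (g (Φ.symm (s', v₁)).1) (g' s') + dist (g' s') (g (Φ.symm (s', v₂)).1)) := by
        gcongr; exact dist_triangle _ _ _
    _ ≤ (1/2) * (δ + δ) := by
        gcongr
        · rw [dist_comm]; exact key s' v₁
        · exact key s' v₂
    _ = δ := by ring
end

section
/- Let J ∈ ℝ^{d×d} and let H₁, …, H_d ∈ ℝ^{d×d} be symmetric matrices with ‖J‖₂ ≤ B′ and ‖H_c‖₂ ≤ B″ for all c ∈ {1,…,d}. Define K^c := J·H_c·Jᵀ for each c. Then ‖ Σ_{c=1}^d Σ_{e=1}^d (K^c)_{c e} · K^e ‖₂ ≤ d^{3/2} · B′⁴ · B″², where (K^c)_{ce} denotes the (c,e) entry of K^c. (This is a matrix inequality established in the paper's proof bounding the Hessian of the log-Jacobian-determinant of an inverse map.) -/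
/-!
Every `K^e = J H_e Jᵀ` has `‖K^e‖₂ ≤ B′² B″` by submultiplicativity. The coefficients of the
`c`-th inner sum form the `c`-th row of `K^c`, whose `ℓ²`-norm is at most `‖K^c‖₂`, so by
Cauchy–Schwarz their absolute values sum to at most `√d · B′² B″`. The triangle inequality over
the `d` outer summands then gives `d · √d · (B′² B″)²`.
-/

open Matrix

noncomputable def l2OpNorm {d : ℕ} (A : Matrix (Fin d) (Fin d) ℝ) : ℝ :=
  ‖(Matrix.toEuclideanCLM (𝕜 := ℝ) A :
      EuclideanSpace ℝ (Fin d) →L[ℝ] EuclideanSpace ℝ (Fin d))‖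

open scoped Matrix.Norms.L2Operator

lemma EuclideanSpace.sum_abs_le_sqrt_card_mul_norm {n : Type*} [Fintype n]
    (x : EuclideanSpace ℝ n) : ∑ i, |x i| ≤ √(Fintype.card n) * ‖x‖ := by
  calc ∑ i, |x i| = ∑ i, 1 * |x i| := by simp only [one_mul]
    _ ≤ √(∑ _i : n, 1 ^ 2) * √(∑ i, |x i| ^ 2) := Real.sum_mul_le_sqrt_mul_sqrt _ _ _
    _ = √(Fintype.card n) * ‖x‖ := by simp [EuclideanSpace.norm_eq, sq_abs]

namespace Matrix

variable {m n : Type*} [Fintype m] [Fintype n] [DecidableEq m] [DecidableEq n]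

lemma l2_opNorm_transpose (A : Matrix m n ℝ) : ‖Aᵀ‖ = ‖A‖ := by
  rw [← conjTranspose_eq_transpose_of_trivial, l2_opNorm_conjTranspose]

lemma norm_row_le_l2_opNorm (A : Matrix m n ℝ) (i : m) :
    ‖WithLp.toLp 2 (A i)‖ ≤ ‖A‖ := by
  have h := l2_opNorm_mulVec Aᵀ (EuclideanSpace.single i 1)
  rwa [PiLp.ofLp_single, mulVec_single_one, col_transpose, PiLp.norm_single, norm_one, mul_one,
    l2_opNorm_transpose] at h

lemma sum_abs_row_le_sqrt_card_mul_l2_opNorm (A : Matrix m n ℝ) (i : m) :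
    ∑ j, |A i j| ≤ √(Fintype.card n) * ‖A‖ :=
  (EuclideanSpace.sum_abs_le_sqrt_card_mul_norm _).trans <|
    mul_le_mul_of_nonneg_left (norm_row_le_l2_opNorm A i) (Real.sqrt_nonneg _)

lemma l2_opNorm_mul_mul_transpose_le (J : Matrix m n ℝ) (H : Matrix n n ℝ) :
    ‖J * H * Jᵀ‖ ≤ ‖J‖ ^ 2 * ‖H‖ :=
  calc ‖J * H * Jᵀ‖ ≤ ‖J‖ * ‖H‖ * ‖Jᵀ‖ := by
        grw [l2_opNorm_mul, l2_opNorm_mul]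
    _ = ‖J‖ ^ 2 * ‖H‖ := by rw [l2_opNorm_transpose]; ring

lemma l2_opNorm_sum_sum_apply_smul_le {K : n → Matrix n n ℝ} {M : ℝ} (hK : ∀ c, ‖K c‖ ≤ M) :
    ‖∑ c, ∑ e, K c c e • K e‖ ≤ Fintype.card n * √(Fintype.card n) * M ^ 2 :=
  calc ‖∑ c, ∑ e, K c c e • K e‖ ≤ ∑ c, ∑ e, |K c c e| * ‖K e‖ := by
        refine (norm_sum_le _ _).trans (Finset.sum_le_sum fun c _ => (norm_sum_le _ _).trans ?_)
        simp only [norm_smul, Real.norm_eq_abs, le_refl]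
    _ ≤ ∑ c, (∑ e, |K c c e|) * M := by
        simp only [Finset.sum_mul]
        gcongr with c _ e _
        exact hK e
    _ ≤ ∑ _c : n, √(Fintype.card n) * M * M := by
        gcongr with c _
        · exact (norm_nonneg _).trans (hK c)
        · exact (sum_abs_row_le_sqrt_card_mul_l2_opNorm (K c) c).trans (by gcongr; exact hK c)
    _ = Fintype.card n * √(Fintype.card n) * M ^ 2 := by
        rw [Finset.sum_const, Finset.card_univ, nsmul_eq_mul]; ring

end Matrix

theorem sum_KcKe_l2OpNorm_bound_general
    {d : ℕ} (J : Matrix (Fin d) (Fin d) ℝ) (H : Fin d → Matrix (Fin d) (Fin d) ℝ)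
    (B' B'' : ℝ)
    (hJ : l2OpNorm J ≤ B') (hH : ∀ c, l2OpNorm (H c) ≤ B'') :
    l2OpNorm (∑ c, ∑ e, (J * H c * Jᵀ) c e • (J * H e * Jᵀ)) ≤
      (d : ℝ) ^ ((3 : ℝ) / 2) * B' ^ 4 * B'' ^ 2 := by
  have hK (c : Fin d) : ‖J * H c * Jᵀ‖ ≤ B' ^ 2 * B'' :=
    (l2_opNorm_mul_mul_transpose_le J (H c)).trans <| by
      gcongr
      exacts [hJ, hH c]
  have hpow : (d : ℝ) ^ ((3 : ℝ) / 2) = d * √d := by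
    rw [Real.sqrt_eq_rpow, ← Real.rpow_one_add' (Nat.cast_nonneg d) (by norm_num)]
    norm_num
  calc l2OpNorm (∑ c, ∑ e, (J * H c * Jᵀ) c e • (J * H e * Jᵀ))
      ≤ d * √d * (B' ^ 2 * B'') ^ 2 := by
        have h := l2_opNorm_sum_sum_apply_smul_le hK
        rwa [Fintype.card_fin] at h
    _ = (d : ℝ) ^ ((3 : ℝ) / 2) * B' ^ 4 * B'' ^ 2 := by rw [hpow]; ring

/-- Matrix inequality from the paper's bound on the Hessian of the log-Jacobian-determinant:
with `K^c := J · H_c · Jᵀ`, `‖J‖₂ ≤ B′` and `‖H_c‖₂ ≤ B″` for symmetric `H_c`,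
`‖Σ_{c,e} (K^c)_{ce} · K^e‖₂ ≤ d^{3/2} · B′⁴ · B″²`. -/
theorem sum_KcKe_l2OpNorm_bound
    {d : ℕ} (J : Matrix (Fin d) (Fin d) ℝ) (H : Fin d → Matrix (Fin d) (Fin d) ℝ)
    (hsymm : ∀ c, (H c).IsSymm) (B' B'' : ℝ)
    (hJ : l2OpNorm J ≤ B') (hH : ∀ c, l2OpNorm (H c) ≤ B'') :
    l2OpNorm (∑ c, ∑ e, (J * H c * Jᵀ) c e • (J * H e * Jᵀ)) ≤
      (d : ℝ) ^ ((3 : ℝ) / 2) * B' ^ 4 * B'' ^ 2 :=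
  sum_KcKe_l2OpNorm_bound_general J H B' B'' hJ hH
end
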